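/- arXiv:2105.06669 — 9 statements merged into one kernel-verified Lean document; each statement's English description precedes it below -/
import Mathlib

section
/- For every integer n ≥ 2, every separation parameter s > 0, and every real number r > 0, there exist an axes-aligned square L ⊆ ℝ² and integrable density functions f₁,…,f_n : ℝ² → [0,∞) vanishing outside L such that MMS_i^{n,s} > 0 for every i ∈ {1,…,n}, yet there is no family A₁,…,A_n of axes-aligned rectangles contained in L that is pairwise s-separated and satisfies v_i(A_i) ≥ r · MMS_i^{n,s} for every i ∈ {1,…,n}. -/
open MeasureTheory

noncomputable section

/-- A point of the plane. -/
abbrev Pt := ℝ × ℝ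

/-- The ℓ∞ distance between two points of the plane. -/
def linfDist (p q : Pt) : ℝ := max |p.1 - q.1| |p.2 - q.2|

/-- Two pieces of land are `s`-separated: every pair of points, one from each piece,
is at ℓ∞ distance at least `s`. -/
def SepSets (s : ℝ) (A B : Set Pt) : Prop := ∀ p ∈ A, ∀ q ∈ B, s ≤ linfDist p q

/-- An axes-aligned rectangle `[a,b] × [c,d]` with `a < b` and `c < d`. -/
structure Rect where
  a : ℝ
  b : ℝ
  c : ℝ
  d : ℝ
  hab : a < b
  hcd : c < d

/-- The set of points of a rectangle. -/
def Rect.set (R : Rect) : Set Pt := Set.Icc R.a R.b ×ˢ Set.Icc R.c R.d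

/-- The length of the shorter side of a rectangle. -/
def Rect.short (R : Rect) : ℝ := min (R.b - R.a) (R.d - R.c)

/-- The length of the longer side of a rectangle. -/
def Rect.long (R : Rect) : ℝ := max (R.b - R.a) (R.d - R.c)

/-- A rectangle is `r`-fat if its longer side is at most `r` times its shorter side. -/
def Rect.Fat (r : ℝ) (R : Rect) : Prop := R.long ≤ r * R.short

/-- The value of a piece `Z` under the density `f`. -/
def val (f : Pt → ℝ) (Z : Set Pt) : ℝ := ∫ p in Z, f p

/-- The 1-out-of-`k` maximin share of an agent with density `f` on land `L`
with separation parameter `s`: the supremum over families of `k` axes-aligned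
rectangles inside `L`, pairwise intersecting in zero measure and pairwise
`s`-separated, of the minimum value of a rectangle. -/
def MMS (f : Pt → ℝ) (L : Set Pt) (s : ℝ) (k : ℕ) : ℝ :=
  sSup {t : ℝ | ∃ P : Fin k → Rect,
    (∀ j, (P j).set ⊆ L) ∧
    (∀ i j, i ≠ j → volume ((P i).set ∩ (P j).set) = 0) ∧
    (∀ i j, i ≠ j → SepSets s ((P i).set) ((P j).set)) ∧
    (∀ j, t ≤ val f ((P j).set))}

/-- A valuation given by density `f` is `s`-normalized: there are finitely many
pairwise `s`-separated axes-aligned rectangles, each of value at most 1,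
such that `f` vanishes outside their union. -/
def SNormalized (s : ℝ) (f : Pt → ℝ) : Prop :=
  ∃ (N : ℕ) (Q : Fin N → Rect),
    (∀ i j, i ≠ j → SepSets s ((Q i).set) ((Q j).set)) ∧
    (∀ i, val f ((Q i).set) ≤ 1) ∧
    (∀ p, p ∉ ⋃ i, (Q i).set → f p = 0)

/-- The unit square `[0,1] × [0,1]`. -/
def unitSquare : Set Pt := Set.Icc (0 : ℝ) 1 ×ˢ Set.Icc (0 : ℝ) 1

/-- `Guillotine s a0 a1 b0 b1 P`: the family `P` of rectangles forms an
`s`-separated guillotine partition of `[a0,a1] × [b0,b1]`. -/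
inductive Guillotine (s : ℝ) : ℝ → ℝ → ℝ → ℝ → List Rect → Prop
  | single (a0 a1 b0 b1 : ℝ) (P : Rect)
      (h : P.set ⊆ Set.Icc a0 a1 ×ˢ Set.Icc b0 b1) :
      Guillotine s a0 a1 b0 b1 [P]
  | vert (a0 a1 b0 b1 a : ℝ) (h1 : a0 < a) (h2 : a < a1 - s)
      (P1 P2 : List Rect)
      (g1 : Guillotine s a0 a b0 b1 P1)
      (g2 : Guillotine s (a + s) a1 b0 b1 P2) :
      Guillotine s a0 a1 b0 b1 (P1 ++ P2)
  | horiz (a0 a1 b0 b1 b : ℝ) (h1 : b0 < b) (h2 : b < b1 - s)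
      (P1 P2 : List Rect)
      (g1 : Guillotine s a0 a1 b0 b P1)
      (g2 : Guillotine s a0 a1 (b + s) b1 P2) :
      Guillotine s a0 a1 b0 b1 (P1 ++ P2)



/-!
Each agent values `n` small squares ("spots", closed balls of the sup metric), pairwise more than
`s` apart, so its maximin share is positive. All `n²` spots lie in `n - 1` sites, and spots of two
different agents at the same site are closer than `s`. A piece of positive value meets one of its
owner's spots, so by pigeonhole two agents of any allocation meet spots at a common site and their
pieces are not `s`-separated. The ℓ∞ metric is what makes room for `n` separated spots per agent
in only `n - 1` sites: offsets `±(1, 0)` and `±(0, 1)` from a site are at ℓ∞ distance `1` from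
each other but `2` from their negatives, so one site can carry two spots of a "horizontal" agent
and two of a "vertical" one.
-/

open Metric

lemma linfDist_eq_dist (p q : Pt) : linfDist p q = dist p q := by
  simp only [linfDist, Prod.dist_eq, Real.dist_eq]

lemma SepSets.disjoint {s : ℝ} (hs : 0 < s) {A B : Set Pt} (h : SepSets s A B) :
    Disjoint A B :=
  Set.disjoint_left.2 fun p hpA hpB => by
    have := h p hpA p hpB
    rw [linfDist_eq_dist, dist_self] at this
    linarith

lemma sepSets_closedBall {s δ : ℝ} {z z' : Pt} (h : s + 2 * δ ≤ dist z z') :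
    SepSets s (closedBall z δ) (closedBall z' δ) := by
  intro p hp q hq
  rw [mem_closedBall] at hp hq
  rw [linfDist_eq_dist]
  linarith [dist_triangle4 z p q z', dist_comm p z]

lemma dist_lt_of_mem_closedBall {s δ : ℝ} {z z' p q : Pt} (h : dist z z' < s - 2 * δ)
    (hp : p ∈ closedBall z δ) (hq : q ∈ closedBall z' δ) : dist p q < s := by
  rw [mem_closedBall] at hp hq
  linarith [dist_triangle4 p z z' q, dist_comm q z']

def Rect.square (z : Pt) {δ : ℝ} (hδ : 0 < δ) : Rect :=
  ⟨z.1 - δ, z.1 + δ, z.2 - δ, z.2 + δ, by linarith, by linarith⟩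

lemma Rect.square_set (z : Pt) {δ : ℝ} (hδ : 0 < δ) :
    (Rect.square z hδ).set = closedBall z δ := by
  rw [← closedBall_prod_same, Real.closedBall_eq_Icc, Real.closedBall_eq_Icc]
  rfl

lemma val_indicator_one {S : Set Pt} (hS : MeasurableSet S) (Z : Set Pt) :
    val (S.indicator 1) Z = volume.real (S ∩ Z) := by
  rw [val, integral_indicator_one hS, measureReal_restrict_apply hS]

lemma exists_square_superset {S : Set Pt} (hS : Bornology.IsBounded S) :
    ∃ x y w : ℝ, 0 < w ∧ S ⊆ Set.Icc x (x + w) ×ˢ Set.Icc y (y + w) := by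
  obtain ⟨R, hR⟩ := (isBounded_iff_subset_closedBall (0 : Pt)).1 hS
  refine ⟨-max R 1, -max R 1, 2 * max R 1, by positivity, ?_⟩
  refine hR.trans ((closedBall_subset_closedBall (le_max_left R 1)).trans_eq ?_)
  rw [Prod.zero_eq_mk, ← closedBall_prod_same, Real.closedBall_eq_Icc]
  ring_nf

lemma le_MMS {f : Pt → ℝ} (hf : Integrable f) (hf0 : 0 ≤ f) {L : Set Pt} {s t : ℝ} {k : ℕ}
    (hs : 0 < s) (hk : 0 < k) (P : Fin k → Rect) (hPL : ∀ j, (P j).set ⊆ L)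
    (hPsep : ∀ i j, i ≠ j → SepSets s ((P i).set) ((P j).set))
    (hPval : ∀ j, t ≤ val f (P j).set) : t ≤ MMS f L s k := by
  refine le_csSup ⟨∫ p, f p, ?_⟩ ⟨P, hPL, fun i j hij => ?_, hPsep, hPval⟩
  · rintro t ⟨P, -, -, -, hP⟩
    exact (hP ⟨0, hk⟩).trans (setIntegral_le_integral hf (.of_forall hf0))
  · rw [(hPsep i j hij).disjoint hs |>.inter_eq, measure_empty]

def spotDensity {ι : Type*} (z : ι → Pt) (δ : ℝ) : Pt → ℝ :=
  (⋃ j, closedBall (z j) δ).indicator 1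

lemma spotDensity_nonneg {ι : Type*} (z : ι → Pt) (δ : ℝ) : 0 ≤ spotDensity z δ :=
  Set.indicator_nonneg fun _ _ => zero_le_one

section spotDensity

variable {ι : Type*} [Finite ι] (z : ι → Pt) (δ : ℝ)

lemma measurableSet_iUnion_closedBall : MeasurableSet (⋃ j, closedBall (z j) δ) :=
  .iUnion fun _ => measurableSet_closedBall

lemma integrable_spotDensity : Integrable (spotDensity z δ) :=
  (integrable_indicator_iff (measurableSet_iUnion_closedBall z δ)).2 <| integrableOn_const <|
    (Bornology.IsBounded.measure_lt_top
      (Bornology.isBounded_iUnion.2 fun _ => isBounded_closedBall)).ne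

lemma val_spotDensity_closedBall (j : ι) :
    val (spotDensity z δ) (closedBall (z j) δ) = volume.real (closedBall (0 : Pt) δ) := by
  rw [spotDensity, val_indicator_one (measurableSet_iUnion_closedBall z δ),
    Set.inter_eq_right.2 (Set.subset_iUnion (fun j => closedBall (z j) δ) j),
    measureReal_def, measureReal_def, Measure.addHaar_closedBall_center]

variable {z δ}

lemma exists_mem_closedBall_of_val_spotDensity_ne_zero {Z : Set Pt}
    (h : val (spotDensity z δ) Z ≠ 0) : ∃ j, ∃ p ∈ Z, p ∈ closedBall (z j) δ := by
  rw [spotDensity, val_indicator_one (measurableSet_iUnion_closedBall z δ)] at h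
  have hne : (⋃ j, closedBall (z j) δ) ∩ Z ≠ ∅ := fun h' => h (by simp [h'])
  obtain ⟨p, hpS, hpZ⟩ := Set.nonempty_iff_ne_empty.2 hne
  obtain ⟨j, hj⟩ := Set.mem_iUnion.1 hpS
  exact ⟨j, p, hpZ, hj⟩

lemma MMS_spotDensity_pos {k : ℕ} (hk : 0 < k) {z : Fin k → Pt} {s : ℝ} (hs : 0 < s)
    (hδ : 0 < δ) (hfar : ∀ j j', j ≠ j' → s + 2 * δ ≤ dist (z j) (z j')) {L : Set Pt}
    (hL : ⋃ j, closedBall (z j) δ ⊆ L) : 0 < MMS (spotDensity z δ) L s k := by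
  refine (ENNReal.toReal_pos (measure_closedBall_pos volume (0 : Pt) hδ).ne'
    measure_closedBall_lt_top.ne).trans_le ?_
  refine le_MMS (integrable_spotDensity z δ) (spotDensity_nonneg z δ) hs hk
    (fun j => Rect.square (z j) hδ) (fun j => ?_) (fun i j hij => ?_) (fun j => ?_)
    <;> simp only [Rect.square_set]
  · exact (Set.subset_iUnion (fun j => closedBall (z j) δ) j).trans hL
  · exact sepSets_closedBall (hfar i j hij)
  · exact (val_spotDensity_closedBall z δ j).ge

end spotDensity

theorem false_of_sepSets_of_val_spotDensity_ne_zero {n m : ℕ} (hmn : m < n) {s δ : ℝ}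
    {c : Fin n → Fin n → Pt} (σ : Fin n → Fin n → Fin m)
    (hclose : ∀ a a' j j', a ≠ a' → σ a j = σ a' j' → dist (c a j) (c a' j') < s - 2 * δ)
    (A : Fin n → Set Pt) (hsep : ∀ a a', a ≠ a' → SepSets s (A a) (A a'))
    (hval : ∀ a, val (spotDensity (c a) δ) (A a) ≠ 0) : False := by
  choose j p hpA hp using fun a => exists_mem_closedBall_of_val_spotDensity_ne_zero (hval a)
  obtain ⟨a, a', hne, hσ⟩ :=
    Fintype.exists_ne_map_eq_of_card_lt (fun a => σ a (j a)) (by simpa using hmn)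
  have hsep' := hsep a a' hne _ (hpA a) _ (hpA a')
  rw [linfDist_eq_dist] at hsep'
  exact (dist_lt_of_mem_closedBall (hclose a a' _ _ hne hσ) (hp a) (hp a')).not_ge hsep'

namespace HardInstance

variable {m : ℕ}

def direction : Fin (m + 1) → Pt := Fin.lastCases (0, 1) fun _ => (1, 0)

lemma norm_direction (a : Fin (m + 1)) : ‖direction a‖ = 1 := by
  cases a using Fin.lastCases <;> simp [direction, Prod.norm_def]

variable [NeZero m]

/- Spot `castSucc k` of agent `a` lies at site `k` (sites are `4` apart on the x-axis) and spot
`last` at `doubleSite a`; the two spots at `doubleSite a` sit at `∓ direction a` from the site.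
The last agent is the only vertical one. -/
def doubleSite : Fin (m + 1) → Fin m := Fin.lastCases 0 id

def site (a : Fin (m + 1)) : Fin (m + 1) → Fin m := Fin.lastCases (doubleSite a) id

def offset (a : Fin (m + 1)) : Fin (m + 1) → Pt :=
  Fin.lastCases (direction a) fun j => if j = doubleSite a then -direction a else 0

def center (a j : Fin (m + 1)) : Pt := (4 * (site a j : ℝ), 0) + offset a j

lemma norm_offset_le (a j : Fin (m + 1)) : ‖offset a j‖ ≤ 1 := by
  cases j using Fin.lastCases with
  | last => simp [offset, norm_direction]
  | cast j => simp only [offset, Fin.lastCases_castSucc]; split_ifs <;> simp [norm_direction]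

lemma offset_eq_zero_of_site_ne {a j : Fin (m + 1)} (h : site a j ≠ doubleSite a) :
    offset a j = 0 := by
  cases j using Fin.lastCases with
  | last => simp [site] at h
  | cast j => simp_all [site, offset]

lemma offset_eq_direction_or_neg (a j : Fin (m + 1)) :
    offset a j = direction a ∨ offset a j = -direction a ∨ offset a j = 0 := by
  cases j using Fin.lastCases with
  | last => simp [offset]
  | cast j => simp only [offset, Fin.lastCases_castSucc]; split_ifs <;> simp

lemma dist_center_of_site_eq {a a' j j' : Fin (m + 1)} (h : site a j = site a' j') :
    dist (center a j) (center a' j') = dist (offset a j) (offset a' j') := by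
  rw [center, center, h, dist_add_left]

lemma two_le_dist_center_of_site_ne {a a' j j' : Fin (m + 1)} (h : site a j ≠ site a' j') :
    2 ≤ dist (center a j) (center a' j') := by
  have hsite : (1 : ℝ) ≤ |(site a j : ℝ) - site a' j'| := by
    have := Int.one_le_abs (sub_ne_zero.2 (Int.natCast_inj.not.2 (Fin.val_ne_of_ne h)))
    exact_mod_cast this
  have ho := (norm_fst_le (offset a j)).trans (norm_offset_le a j)
  have ho' := (norm_fst_le (offset a' j')).trans (norm_offset_le a' j')
  rw [Real.norm_eq_abs] at ho ho'
  have hx : (center a j).1 - (center a' j').1 =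
      4 * ((site a j : ℝ) - site a' j') + ((offset a j).1 - (offset a' j').1) := by
    simp only [center, Prod.fst_add]; ring
  have htri := abs_sub (4 * ((site a j : ℝ) - site a' j') + ((offset a j).1 - (offset a' j').1))
    ((offset a j).1 - (offset a' j').1)
  rw [add_sub_cancel_right, abs_mul, abs_of_pos four_pos] at htri
  calc (2 : ℝ) ≤ |(center a j).1 - (center a' j').1| := by
        rw [hx]; linarith [abs_sub (offset a j).1 (offset a' j').1]
    _ ≤ dist (center a j) (center a' j') := by
        rw [Prod.dist_eq, Real.dist_eq]; exact le_max_left _ _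

lemma two_le_dist_center {a j j' : Fin (m + 1)} (hj : j ≠ j') :
    2 ≤ dist (center a j) (center a j') := by
  by_cases h : site a j = site a j'
  · have hee : dist (direction a) (-direction a) = 2 := by
      rw [dist_eq_norm, sub_neg_eq_add, ← two_smul ℝ, norm_smul, norm_direction]; norm_num
    rw [dist_center_of_site_eq h]
    cases j using Fin.lastCases <;> cases j' using Fin.lastCases
    · exact absurd rfl hj
    · simp_all [site, offset]
    · simp_all [site, offset, dist_comm]
    · simp_all [site]
  · exact two_le_dist_center_of_site_ne h

lemma dist_center_le_one {a a' j j' : Fin (m + 1)} (ha : a ≠ a') (h : site a j = site a' j') :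
    dist (center a j) (center a' j') ≤ 1 := by
  rw [dist_center_of_site_eq h]
  by_cases h0 : offset a j = 0
  · rw [h0, dist_zero_left]; exact norm_offset_le a' j'
  by_cases h0' : offset a' j' = 0
  · rw [h0', dist_zero_right]; exact norm_offset_le a j
  have hd : doubleSite a = doubleSite a' :=
    (not_imp_comm.1 offset_eq_zero_of_site_ne h0).symm.trans
      (h.trans (not_imp_comm.1 offset_eq_zero_of_site_ne h0'))
  have hu := (offset_eq_direction_or_neg a j).imp_right (Or.resolve_right · h0)
  have hu' := (offset_eq_direction_or_neg a' j').imp_right (Or.resolve_right · h0')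
  rcases hu with e | e <;> rcases hu' with e' | e' <;> rw [e, e'] <;>
  cases a using Fin.lastCases <;> cases a' using Fin.lastCases <;>
  simp only [direction, doubleSite, Fin.lastCases_last, Fin.lastCases_castSucc, id,
    ne_eq, Fin.castSucc_inj] at hd ha ⊢
  all_goals first | exact absurd hd ha | norm_num [Prod.dist_eq]

theorem exists_spots {s : ℝ} (hs : 0 < s) :
    ∃ (c : Fin (m + 1) → Fin (m + 1) → Pt) (σ : Fin (m + 1) → Fin (m + 1) → Fin m),
      (∀ a j j', j ≠ j' → s + 2 * (s / 16) ≤ dist (c a j) (c a j')) ∧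
      ∀ a a' j j', a ≠ a' → σ a j = σ a' j' →
        dist (c a j) (c a' j') < s - 2 * (s / 16) := by
  have hdist (a a' j j' : Fin (m + 1)) :
      dist ((3 * s / 4) • center a j) ((3 * s / 4) • center a' j') =
        3 * s / 4 * dist (center a j) (center a' j') := by
    rw [dist_smul₀, Real.norm_of_nonneg (by positivity)]
  -- distinct spots of an agent end up `≥ 3s/2 ≥ s + 2(s/16)` apart, spots of different agents
  -- at one site `≤ 3s/4 < s - 2(s/16)` apart
  refine ⟨fun a j => (3 * s / 4) • center a j, site, fun a j j' hj => ?_,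
    fun a a' j j' ha h => ?_⟩
  · rw [hdist]; nlinarith [two_le_dist_center (a := a) hj]
  · rw [hdist]; nlinarith [dist_center_le_one ha h]

end HardInstance

/-- Impossibility of any multiplicative approximation of the maximin share
under separation. -/
theorem stmt0 (n : ℕ) (hn : 2 ≤ n) (s : ℝ) (hs : 0 < s) (r : ℝ) (hr : 0 < r) :
    ∃ (L : Set Pt) (f : Fin n → Pt → ℝ),
      (∃ x y w : ℝ, 0 < w ∧ L = Set.Icc x (x + w) ×ˢ Set.Icc y (y + w)) ∧
      (∀ i, Integrable (f i)) ∧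
      (∀ i p, 0 ≤ f i p) ∧
      (∀ i p, p ∉ L → f i p = 0) ∧
      (∀ i, 0 < MMS (f i) L s n) ∧
      ¬ ∃ A : Fin n → Rect,
          (∀ i, (A i).set ⊆ L) ∧
          (∀ i j, i ≠ j → SepSets s ((A i).set) ((A j).set)) ∧
          (∀ i, r * MMS (f i) L s n ≤ val (f i) ((A i).set)) := by
  obtain ⟨m, rfl⟩ : ∃ m, n = m + 1 := ⟨n - 1, by omega⟩
  have : NeZero m := ⟨by omega⟩
  obtain ⟨c, σ, hfar, hclose⟩ := HardInstance.exists_spots (m := m) hs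
  obtain ⟨x, y, w, hw, hL⟩ := exists_square_superset <| Bornology.isBounded_iUnion.2 fun a =>
    Bornology.isBounded_iUnion.2 fun j => isBounded_closedBall (x := c a j) (r := s / 16)
  have hMMS (a : Fin (m + 1)) : 0 < MMS (spotDensity (c a) (s / 16)) _ s (m + 1) :=
    MMS_spotDensity_pos m.succ_pos hs (by positivity) (hfar a)
      ((Set.subset_iUnion (fun a => ⋃ j, closedBall (c a j) (s / 16)) a).trans hL)
  refine ⟨_, fun a => spotDensity (c a) (s / 16), ⟨x, y, w, hw, rfl⟩,
    fun a => integrable_spotDensity _ _, fun a => spotDensity_nonneg _ _,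
    fun a p hp => Set.indicator_of_notMem (fun hp' => hp (hL (Set.mem_iUnion.2 ⟨a, hp'⟩))) _,
    hMMS, ?_⟩
  rintro ⟨A, -, hsep, hval⟩
  exact false_of_sepSets_of_val_spotDensity_ne_zero m.lt_succ_self σ hclose _ hsep
    fun a => ((mul_pos hr (hMMS a)).trans_le (hval a)).ne'
end
end

section
/- For every integer n ≥ 2 there exist sets S₁,…,S_n ⊆ ℝ², each containing exactly n points, such that any two distinct points belonging to the same set S_i are at ℓ∞ distance strictly greater than 1, while for every choice of representatives p₁ ∈ S₁,…,p_n ∈ S_n there exist indices i ≠ j such that the ℓ∞ distance between p_i and p_j is strictly less than 1. -/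
open MeasureTheory

noncomputable section

namespace Stmt1Work

def home (i : ℕ) : ℕ := i / 2

def gpt (m : ℕ) : Pt := ((4 * m : ℝ), 0)

def dlo (i : ℕ) : Pt :=
  if i % 2 = 0 then ((4 * home i : ℝ) - 3/5, 0) else ((4 * home i : ℝ), -(4/5))

def dhi (i : ℕ) : Pt :=
  if i % 2 = 0 then ((4 * home i : ℝ) + 3/5, 0) else ((4 * home i : ℝ), 4/5)

def P (n i j : ℕ) : Pt :=
  if j = n - 1 then dhi i
  else if j = home i then dlo i
  else gpt j

lemma one_le_gap {a b : ℕ} (h : a ≠ b) : (1:ℝ) ≤ |(a:ℝ) - b| := by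
  rcases lt_or_gt_of_ne h with h' | h'
  · have hx : (a:ℝ) + 1 ≤ b := by exact_mod_cast Nat.succ_le_of_lt h'
    rw [abs_sub_comm, abs_of_pos (by linarith)]; linarith
  · have hx : (b:ℝ) + 1 ≤ a := by exact_mod_cast Nat.succ_le_of_lt h'
    rw [abs_of_pos (by linarith)]; linarith

lemma gap {a b : ℕ} (h : a ≠ b) : (4:ℝ) ≤ |4 * (a:ℝ) - 4 * b| := by
  have h1 : |4 * (a:ℝ) - 4 * b| = 4 * |(a:ℝ) - b| := by
    rw [show (4:ℝ) * a - 4 * b = 4 * ((a:ℝ) - b) by ring, abs_mul]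
    norm_num
  have := one_le_gap h
  rw [h1]; linarith

lemma abs_shift {u v c : ℝ} (h4 : (4:ℝ) ≤ |u - v|) (hc : |c| ≤ 1) : 3 ≤ |u + c - v| := by
  have h := abs_add_le (u + c - v) (-c)
  rw [abs_neg] at h
  rw [show u + c - v + -c = u - v by ring] at h
  linarith

lemma far_x {t k : ℕ} (h : t ≠ k) {c : ℝ} (hc : |c| ≤ 1) :
    1 < |4 * (t:ℝ) + c - 4 * (k:ℝ)| := by
  have := abs_shift (gap h) hc
  linarith

lemma abs_small {x c : ℝ} (hx : x = c) (h1 : -1 < c) (h2 : c < 1) : |x| < 1 := by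
  subst hx; rw [abs_lt]; exact ⟨h1, h2⟩

lemma linf_comm (p q : Pt) : linfDist p q = linfDist q p := by
  simp [linfDist, abs_sub_comm]

lemma linf_self (p : Pt) : linfDist p p = 0 := by simp [linfDist]


lemma lt_one_aux {x y : ℝ} (hx : |x| < 1) (hy : |y| < 1) : max |x| |y| < 1 := max_lt hx hy

lemma main_far {n i : ℕ} (hn : 2 ≤ n) (hi : i < n) {j k : ℕ} (hj : j < n) (hk : k < n)
    (hjk : j ≠ k) : 1 < linfDist (P n i j) (P n i k) := by
  have ht : home i < n - 1 := by unfold home; omega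
  unfold P
  by_cases h1 : j = n - 1
  · by_cases h2 : k = n - 1
    · omega
    · simp only [h1, if_pos rfl, if_neg h2]
      by_cases h3 : k = home i
      · -- dhi i vs dlo i
        rw [if_pos h3]
        by_cases hp : i % 2 = 0 <;> simp only [dhi, dlo, hp, if_pos, if_neg, linfDist,
          reduceIte] <;> rw [lt_max_iff]
        · left
          rw [show (4 * (home i : ℝ) + 3/5) - (4 * (home i : ℝ) - 3/5) = 6/5 by ring]
          rw [lt_abs]; left; norm_num
        · right
          rw [show (4/5 : ℝ) - -(4/5) = 8/5 by ring]
          rw [lt_abs]; left; norm_num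
      · -- dhi i vs gpt k
        rw [if_neg h3]
        have h3' : home i ≠ k := fun h => h3 h.symm
        by_cases hp : i % 2 = 0 <;> simp only [dhi, gpt, hp, linfDist, reduceIte] <;>
          rw [lt_max_iff] <;> left
        · exact far_x h3' (by rw [abs_le]; constructor <;> norm_num)
        · have := far_x h3' (c := 0) (by norm_num)
          rw [show 4 * ((home i : ℝ)) + 0 - 4 * (k:ℝ) = 4 * ((home i : ℝ)) - 4 * (k:ℝ) by ring] at this
          exact this
  · rw [if_neg h1]
    by_cases h2 : j = home i
    · rw [if_pos h2]
      by_cases h3 : k = n - 1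
      · -- dlo i vs dhi i
        simp only [h3, if_pos rfl]
        by_cases hp : i % 2 = 0 <;> simp only [dhi, dlo, hp, linfDist, reduceIte] <;>
          rw [lt_max_iff]
        · left
          rw [show (4 * (home i : ℝ) - 3/5) - (4 * (home i : ℝ) + 3/5) = -(6/5) by ring]
          rw [lt_abs]; right; norm_num
        · right
          rw [show (-(4/5) : ℝ) - 4/5 = -(8/5) by ring]
          rw [lt_abs]; right; norm_num
      · -- dlo i vs gpt k;  k ≠ home i since j = home i and j ≠ k
        rw [if_neg h3, if_neg (show k ≠ home i by omega)]
        have h3' : home i ≠ k := by omega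
        by_cases hp : i % 2 = 0 <;> simp only [dlo, gpt, hp, linfDist, reduceIte] <;>
          rw [lt_max_iff] <;> left
        · have := far_x h3' (c := -(3/5)) (by rw [abs_le]; constructor <;> norm_num)
          rw [show 4 * ((home i : ℝ)) + -(3/5) - 4 * (k:ℝ)
              = 4 * ((home i : ℝ)) - 3/5 - 4 * (k:ℝ) by ring] at this
          exact this
        · have := far_x h3' (c := 0) (by norm_num)
          rw [show 4 * ((home i : ℝ)) + 0 - 4 * (k:ℝ) = 4 * ((home i : ℝ)) - 4 * (k:ℝ) by ring] at this
          exact this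
    · rw [if_neg h2]
      by_cases h3 : k = n - 1
      · -- gpt j vs dhi i
        simp only [h3, if_pos rfl]
        have h2' : j ≠ home i := h2
        by_cases hp : i % 2 = 0 <;> simp only [dhi, gpt, hp, linfDist, reduceIte] <;>
          rw [lt_max_iff] <;> left <;> rw [abs_sub_comm]
        · exact far_x (fun h => h2' h.symm) (by rw [abs_le]; constructor <;> norm_num)
        · have := far_x (fun h => h2' h.symm) (c := 0) (by norm_num)
          rw [show 4 * ((home i : ℝ)) + 0 - 4 * (j:ℝ) = 4 * ((home i : ℝ)) - 4 * (j:ℝ) by ring] at this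
          exact this
      · by_cases h4 : k = home i
        · -- gpt j vs dlo i
          rw [if_neg h3, if_pos h4]
          have h2' : j ≠ home i := h2
          by_cases hp : i % 2 = 0 <;> simp only [dlo, gpt, hp, linfDist, reduceIte] <;>
            rw [lt_max_iff] <;> left <;> rw [abs_sub_comm]
          · have := far_x (fun h => h2' h.symm) (c := -(3/5)) (by rw [abs_le]; constructor <;> norm_num)
            rw [show 4 * ((home i : ℝ)) + -(3/5) - 4 * (j:ℝ)
                = 4 * ((home i : ℝ)) - 3/5 - 4 * (j:ℝ) by ring] at this
            exact this
          · have := far_x (fun h => h2' h.symm) (c := 0) (by norm_num)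
            rw [show 4 * ((home i : ℝ)) + 0 - 4 * (j:ℝ) = 4 * ((home i : ℝ)) - 4 * (j:ℝ) by ring] at this
            exact this
        · -- gpt j vs gpt k
          rw [if_neg h3, if_neg h4]
          simp only [gpt, linfDist]
          rw [lt_max_iff]; left
          have := far_x hjk (c := 0) (by norm_num)
          rw [show 4 * ((j:ℝ)) + 0 - 4 * (k:ℝ) = 4 * ((j:ℝ)) - 4 * (k:ℝ) by ring] at this
          exact this


lemma close_cd {i m : ℕ} (hm : home i = m) {q : Pt} (hq : q = dhi i ∨ q = dlo i) :
    linfDist (gpt m) q < 1 := by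
  subst hm
  by_cases hp : i % 2 = 0 <;> rcases hq with h | h <;> subst h <;>
    simp only [gpt, dhi, dlo, hp, linfDist, reduceIte] <;>
    (rw [max_lt_iff]; constructor <;> (rw [abs_lt]; constructor <;> linarith))

lemma close_dd {i j m : ℕ} (hi : home i = m) (hj : home j = m)
    (hpi : i % 2 = 0) (hpj : ¬ j % 2 = 0) {p q : Pt}
    (hp : p = dhi i ∨ p = dlo i) (hq : q = dhi j ∨ q = dlo j) :
    linfDist p q < 1 := by
  subst hi
  rcases hp with h | h <;> rcases hq with h' | h' <;> subst h <;> subst h' <;>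
    simp only [dhi, dlo, hpi, hpj, hj, linfDist, reduceIte] <;>
    (rw [max_lt_iff]; constructor <;> (rw [abs_lt]; constructor <;> linarith))

lemma classify {n i j : ℕ} :
    P n i j = gpt (if j = n - 1 ∨ j = home i then home i else j) ∨
      (home i = (if j = n - 1 ∨ j = home i then home i else j) ∧
        (P n i j = dhi i ∨ P n i j = dlo i)) := by
  unfold P
  by_cases h1 : j = n - 1
  · rw [if_pos (Or.inl h1), if_pos h1]
    exact Or.inr ⟨rfl, Or.inl rfl⟩
  · by_cases h2 : j = home i
    · rw [if_pos (Or.inr h2), if_neg h1, if_pos h2]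
      exact Or.inr ⟨rfl, Or.inr rfl⟩
    · rw [if_neg (by tauto : ¬(j = n - 1 ∨ j = home i)), if_neg h1, if_neg h2]
      exact Or.inl rfl


theorem stmt1' (n : ℕ) (hn : 2 ≤ n) :
    ∃ S : Fin n → Finset Pt,
      (∀ i, (S i).card = n) ∧
      (∀ i, ∀ p ∈ S i, ∀ q ∈ S i, p ≠ q → 1 < linfDist p q) ∧
      (∀ rep : Fin n → Pt, (∀ i, rep i ∈ S i) →
        ∃ i j, i ≠ j ∧ linfDist (rep i) (rep j) < 1) := by
  have hinj : ∀ i : Fin n, Function.Injective (fun j : Fin n => P n i.val j.val) := by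
    intro i j k h
    by_contra hne
    have hv : j.val ≠ k.val := fun hc => hne (Fin.ext hc)
    have hfar := main_far hn i.isLt j.isLt k.isLt hv
    simp only at h
    rw [h, linf_self] at hfar
    linarith
  refine ⟨fun i => Finset.image (fun j : Fin n => P n i.val j.val) Finset.univ, ?_, ?_, ?_⟩
  · intro i
    rw [Finset.card_image_of_injective _ (hinj i), Finset.card_univ, Fintype.card_fin]
  · intro i p hp q hq hpq
    simp only [Finset.mem_image, Finset.mem_univ, true_and] at hp hq
    obtain ⟨j, hj⟩ := hp
    obtain ⟨k, hk⟩ := hq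
    subst hj; subst hk
    have hv : j.val ≠ k.val := by
      intro hc
      exact hpq (by rw [Fin.ext hc])
    exact main_far hn i.isLt j.isLt k.isLt hv
  · intro rep hrep
    have hch : ∀ i : Fin n, ∃ j : Fin n, P n i.val j.val = rep i := by
      intro i
      have := hrep i
      simpa [Finset.mem_image] using this
    choose jf hjf using hch
    have hgadlt : ∀ i : Fin n,
        (if (jf i).val = n - 1 ∨ (jf i).val = home i.val then home i.val else (jf i).val)
          < n - 1 := by
      intro i
      split_ifs with h
      · have hiv : i.val < n := i.isLt
        unfold home; omega
      · push_neg at h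
        have := (jf i).isLt
        omega
    have hcard : Fintype.card (Fin (n - 1)) < Fintype.card (Fin n) := by
      simp only [Fintype.card_fin]; omega
    obtain ⟨a, b, hab, hfab⟩ :=
      Fintype.exists_ne_map_eq_of_card_lt (fun i => (⟨_, hgadlt i⟩ : Fin (n - 1))) hcard
    refine ⟨a, b, hab, ?_⟩
    have hca := classify (n := n) (i := a.val) (j := (jf a).val)
    have hcb := classify (n := n) (i := b.val) (j := (jf b).val)
    rw [hjf a] at hca
    rw [hjf b] at hcb
    have hm : (if (jf a).val = n - 1 ∨ (jf a).val = home a.val then home a.val else (jf a).val)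
            = (if (jf b).val = n - 1 ∨ (jf b).val = home b.val then home b.val else (jf b).val) :=
      congrArg Fin.val hfab
    rw [← hm] at hcb
    set m := (if (jf a).val = n - 1 ∨ (jf a).val = home a.val then home a.val else (jf a).val)
      with hmdef
    rcases hca with h1 | ⟨hha, h1⟩ <;> rcases hcb with h2 | ⟨hhb, h2⟩
    · rw [h1, h2, linf_self]; norm_num
    · rw [h1]
      exact close_cd hhb h2
    · rw [linf_comm, h2]
      exact close_cd hha h1
    · have hvne : a.val ≠ b.val := fun hc => hab (Fin.ext hc)
      have hhab : home a.val = home b.val := by rw [hha, hhb]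
      have hpar : (a.val % 2 = 0 ∧ ¬ b.val % 2 = 0) ∨ (¬ a.val % 2 = 0 ∧ b.val % 2 = 0) := by
        unfold home at hhab; omega
      rcases hpar with ⟨he, ho⟩ | ⟨ho, he⟩
      · exact close_dd hha hhb he ho h1 h2
      · rw [linf_comm]
        exact close_dd hhb hha he ho h2 h1

end Stmt1Work

/-- There are `n` sets of `n` points each, with points within each set at ℓ∞
distance more than 1, such that any choice of representatives contains two at
ℓ∞ distance less than 1. -/
theorem stmt1 (n : ℕ) (hn : 2 ≤ n) :
    ∃ S : Fin n → Finset Pt,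
      (∀ i, (S i).card = n) ∧
      (∀ i, ∀ p ∈ S i, ∀ q ∈ S i, p ≠ q → 1 < linfDist p q) ∧
      (∀ rep : Fin n → Pt, (∀ i, rep i ∈ S i) →
        ∃ i j, i ≠ j ∧ linfDist (rep i) (rep j) < 1) :=
  Stmt1Work.stmt1' n hn
end
end

section
/- Let r ≥ 1 and set m = ⌈r⌉ + 2. Let Q₁,…,Q_m and Q'₁,…,Q'_m be two families of axes-aligned r-fat rectangles such that the rectangles within each family are pairwise disjoint. Then there exist indices i and j such that Q_i and Q'_j are disjoint. -/
/-!
Suppose every `Q i` overlaps every `Q' j`, and (by symmetry) that the lowest top edge of all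
`2m` rectangles belongs to some `Q i₀`. Then all `Q' j` cross a horizontal line just below that
edge, so their `x`-projections are pairwise disjoint. Every `Q i` meets the leftmost-ending and
the rightmost-starting `Q' j`, hence covers the gap `(L, U)` between them horizontally; so the
`Q i` are stacked vertically, and symmetrically every `Q' j` covers a vertical gap `(L', U')`
between two of the `Q i`. The `m - 2` middle `Q' j` fit side by side in `(L, U)`, each of width
more than `(U' - L') / r` by fatness, and the `m - 2` middle `Q i` fit in `(L', U')`, each of
height more than `(U - L) / r`. Since `r ≤ m - 2` this forces both `U' - L' < U - L` and
`U - L < U' - L'`.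
-/

open MeasureTheory

noncomputable section

lemma le_or_le_of_not_max_lt_min {a b c d : ℝ} (hab : a < b) (hcd : c < d)
    (h : ¬ max a c < min b d) : b ≤ c ∨ d ≤ a := by
  by_contra! hc
  exact h (max_lt (lt_min hab hc.2) (lt_min hc.1 hcd))

lemma sum_sub_le_sub_of_pairwise_separated {ι : Type*} (S : Finset ι) (a b : ι → ℝ)
    (hab : ∀ i ∈ S, a i ≤ b i)
    (hsep : (S : Set ι).Pairwise fun i j => b i ≤ a j ∨ b j ≤ a i)
    {L U : ℝ} (hLU : L ≤ U) (hsub : ∀ i ∈ S, L ≤ a i ∧ b i ≤ U) :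
    ∑ i ∈ S, (b i - a i) ≤ U - L := by
  have hdisj : (S : Set ι).PairwiseDisjoint fun i => Set.Ioc (a i) (b i) := by
    intro i hi j hj hij
    rcases hsep hi hj hij with h | h
    · exact Set.Ioc_disjoint_Ioc_of_le h
    · exact (Set.Ioc_disjoint_Ioc_of_le h).symm
  have hunion : (⋃ i ∈ S, Set.Ioc (a i) (b i)) ⊆ Set.Ioc L U := by
    simp only [Set.iUnion_subset_iff]
    exact fun i hi => Set.Ioc_subset_Ioc (hsub i hi).1 (hsub i hi).2
  have hle := measure_mono (μ := volume) hunion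
  rw [measure_biUnion_finset hdisj fun _ _ => measurableSet_Ioc] at hle
  simp only [Real.volume_Ioc] at hle
  rwa [← ENNReal.ofReal_sum_of_nonneg (fun i hi => sub_nonneg.2 (hab i hi)),
    ENNReal.ofReal_le_ofReal_iff (sub_nonneg.2 hLU)] at hle

/-- The gap `(L, U)` runs from the first right endpoint `b j₁` to the last left endpoint `a j₂`;
all intervals `(a j, b j)` other than these two lie inside it. -/
lemma exists_gap_of_forall_overlap {ι κ : Type*} [Fintype ι] (a b : ι → ℝ)
    (hab : ∀ j, a j < b j) (hcard : 3 ≤ Fintype.card ι)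
    (hsep : Pairwise fun j k => b j ≤ a k ∨ b k ≤ a j)
    (c d : κ → ℝ) (hov : ∀ k j, max (c k) (a j) < min (d k) (b j)) :
    ∃ L U, L < U ∧ (∀ k, c k < L ∧ U < d k) ∧
      ∀ t, 0 ≤ t → (∀ j, t < b j - a j) → ((Fintype.card ι : ℝ) - 2) * t < U - L := by
  classical
  have : Nonempty ι := Fintype.card_pos_iff.1 (by omega)
  obtain ⟨j₁, hj₁⟩ := Finite.exists_min b
  obtain ⟨j₂, hj₂⟩ := Finite.exists_max a
  set S : Finset ι := Finset.univ \ {j₁, j₂}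
  have hS : ∀ j ∈ S, b j₁ ≤ a j ∧ b j ≤ a j₂ := by
    intro j hj
    simp only [S, Finset.mem_sdiff, Finset.mem_univ, Finset.mem_insert,
      Finset.mem_singleton, true_and, not_or] at hj
    constructor
    · exact (hsep hj.1).resolve_left fun h => by linarith [hj₁ j, hab j₁]
    · exact (hsep hj.2).resolve_right fun h => by linarith [hj₂ j, hab j₂]
  have hScard : (Fintype.card ι : ℝ) - 2 ≤ S.card := by
    have h : Finset.univ.card - ({j₁, j₂} : Finset ι).card ≤ S.card :=
      Finset.le_card_sdiff _ _
    rw [Finset.card_univ] at h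
    have := Finset.card_le_two (a := j₁) (b := j₂)
    have : Fintype.card ι ≤ S.card + 2 := by omega
    have : (Fintype.card ι : ℝ) ≤ S.card + 2 := by exact_mod_cast this
    linarith
  have hSne : S.Nonempty := by
    rw [← Finset.card_pos, ← Nat.cast_pos (α := ℝ)]
    have : (3 : ℝ) ≤ Fintype.card ι := by exact_mod_cast hcard
    linarith
  obtain ⟨j, hj⟩ := hSne
  refine ⟨b j₁, a j₂, by linarith [hS j hj, hab j], fun k => ?_, fun t ht hlen => ?_⟩
  · exact ⟨(le_max_left _ _).trans_lt ((hov k j₁).trans_le (min_le_right _ _)),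
      (le_max_right _ _).trans_lt ((hov k j₂).trans_le (min_le_left _ _))⟩
  · calc ((Fintype.card ι : ℝ) - 2) * t ≤ S.card * t := mul_le_mul_of_nonneg_right hScard ht
      _ = ∑ j ∈ S, t := by rw [Finset.sum_const, nsmul_eq_mul]
      _ < ∑ j ∈ S, (b j - a j) := Finset.sum_lt_sum_of_nonempty ⟨j, hj⟩ fun j _ => hlen j
      _ ≤ a j₂ - b j₁ :=
        sum_sub_le_sub_of_pairwise_separated S a b (fun j _ => (hab j).le)
          (fun j _ k _ hjk => hsep hjk) (by linarith [hS j hj, hab j]) hS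

def Rect.XOverlap (R S : Rect) : Prop := max R.a S.a < min R.b S.b

def Rect.YOverlap (R S : Rect) : Prop := max R.c S.c < min R.d S.d

lemma Rect.XOverlap.symm {R S : Rect} (h : R.XOverlap S) : S.XOverlap R := by
  rwa [XOverlap, max_comm, min_comm]

lemma Rect.YOverlap.symm {R S : Rect} (h : R.YOverlap S) : S.YOverlap R := by
  rwa [YOverlap, max_comm, min_comm]

lemma Rect.volume_inter_eq_zero_iff (R S : Rect) :
    volume (R.set ∩ S.set) = 0 ↔ ¬ (R.XOverlap S ∧ R.YOverlap S) := by
  rw [Rect.set, Rect.set, Set.prod_inter_prod, Set.Icc_inter_Icc, Set.Icc_inter_Icc,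
    Measure.volume_eq_prod, Measure.prod_prod, Real.volume_Icc, Real.volume_Icc, mul_eq_zero,
    ENNReal.ofReal_eq_zero, ENNReal.ofReal_eq_zero]
  simp only [XOverlap, YOverlap, not_and_or, not_lt, sub_nonpos]

lemma Rect.pairwise_yOverlap_of_forall_yOverlap {κ : Type*} {R : Rect} {S : κ → Rect}
    (hRS : ∀ j, R.YOverlap (S j)) (hd : ∀ j, R.d ≤ (S j).d) :
    Pairwise fun j j' => (S j).YOverlap (S j') := by
  intro j j' _
  have hc : ∀ j, (S j).c < R.d :=
    fun j => (le_max_right _ _).trans_lt ((hRS j).trans_le (min_le_left _ _))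
  exact (max_lt (hc j) (hc j')).trans_le (le_min (hd j) (hd j'))

lemma Rect.Fat.width_le {r : ℝ} (hr : 0 ≤ r) {R : Rect} (h : R.Fat r) :
    R.b - R.a ≤ r * (R.d - R.c) :=
  (le_max_left _ _).trans (h.trans (mul_le_mul_of_nonneg_left (min_le_right _ _) hr))

lemma Rect.Fat.height_le {r : ℝ} (hr : 0 ≤ r) {R : Rect} (h : R.Fat r) :
    R.d - R.c ≤ r * (R.b - R.a) :=
  (le_max_right _ _).trans (h.trans (mul_le_mul_of_nonneg_left (min_le_left _ _) hr))

open Rect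

lemma false_of_forall_overlap_of_pairwise_yOverlap {ι κ : Type*} [Fintype ι] [Fintype κ]
    {r : ℝ} (hr : 0 < r)
    (hι : r ≤ (Fintype.card ι : ℝ) - 2) (hκ : r ≤ (Fintype.card κ : ℝ) - 2)
    {Q : ι → Rect} {Q' : κ → Rect} (hQfat : ∀ i, (Q i).Fat r) (hQ'fat : ∀ j, (Q' j).Fat r)
    (hQ : Pairwise fun i i' => ¬ ((Q i).XOverlap (Q i') ∧ (Q i).YOverlap (Q i')))
    (hQ' : Pairwise fun j j' => ¬ ((Q' j).XOverlap (Q' j') ∧ (Q' j).YOverlap (Q' j')))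
    (hQ'y : Pairwise fun j j' => (Q' j).YOverlap (Q' j'))
    (hov : ∀ i j, (Q i).XOverlap (Q' j) ∧ (Q i).YOverlap (Q' j)) : False := by
  have hcard : ∀ n : ℕ, r ≤ (n : ℝ) - 2 → 3 ≤ n := fun n hn => by
    have : (2 : ℝ) < n := by linarith
    exact_mod_cast this
  obtain ⟨L, U, hLU, hQspan, hQ'width⟩ := exists_gap_of_forall_overlap
    (fun j => (Q' j).a) (fun j => (Q' j).b) (fun j => (Q' j).hab) (hcard _ hκ)
    (fun j j' h => le_or_le_of_not_max_lt_min (Q' j).hab (Q' j').hab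
      fun hx => hQ' h ⟨hx, hQ'y h⟩)
    (fun i => (Q i).a) (fun i => (Q i).b) fun i j => (hov i j).1
  have hQy : Pairwise fun i i' => (Q i).d ≤ (Q i').c ∨ (Q i').d ≤ (Q i).c :=
    fun i i' h => le_or_le_of_not_max_lt_min (Q i).hcd (Q i').hcd fun hy => hQ h
      ⟨max_lt (lt_min (Q i).hab (by linarith [hQspan i, hQspan i']))
        (lt_min (by linarith [hQspan i, hQspan i']) (Q i').hab), hy⟩
  obtain ⟨L', U', hLU', hQ'span, hQheight⟩ := exists_gap_of_forall_overlap
    (fun i => (Q i).c) (fun i => (Q i).d) (fun i => (Q i).hcd) (hcard _ hι) hQy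
    (fun j => (Q' j).c) (fun j => (Q' j).d) fun j i => (hov i j).2.symm
  have lt_of_scaled_lt :
      ∀ {n w w' : ℝ}, r ≤ n - 2 → 0 < w' → (n - 2) * (w' / r) < w → w' < w := by
    intro n w w' hn hw' h
    have : r * (w' / r) ≤ (n - 2) * (w' / r) := by gcongr
    rw [mul_div_cancel₀ _ hr.ne'] at this
    linarith
  have h₁ : U' - L' < U - L :=
    lt_of_scaled_lt hκ (by linarith) <| hQ'width _ (by positivity) fun j => by
      rw [div_lt_iff₀' hr]
      linarith [(hQ'fat j).height_le hr.le, hQ'span j]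
  have h₂ : U - L < U' - L' :=
    lt_of_scaled_lt hι (by linarith) <| hQheight _ (by positivity) fun i => by
      rw [div_lt_iff₀' hr]
      linarith [(hQfat i).width_le hr.le, hQspan i]
  exact h₁.not_gt h₂

/-- Among two families of `⌈r⌉+2` pairwise disjoint `r`-fat rectangles each,
some rectangle from the first family is disjoint from some rectangle of the
second family. -/
theorem stmt3 (r : ℝ) (hr : 1 ≤ r) (m : ℕ) (hm : (m : ℤ) = ⌈r⌉ + 2)
    (Q Q' : Fin m → Rect)
    (hQfat : ∀ i, (Q i).Fat r) (hQ'fat : ∀ i, (Q' i).Fat r)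
    (hQdisj : ∀ i j, i ≠ j → volume ((Q i).set ∩ (Q j).set) = 0)
    (hQ'disj : ∀ i j, i ≠ j → volume ((Q' i).set ∩ (Q' j).set) = 0) :
    ∃ i j, volume ((Q i).set ∩ (Q' j).set) = 0 := by
  by_contra! hov
  simp only [ne_eq, volume_inter_eq_zero_iff, not_not] at hov hQdisj hQ'disj
  have hr0 : 0 < r := by linarith
  have hmr : r ≤ (m : ℝ) - 2 := by
    have : ((m : ℤ) : ℝ) = ⌈r⌉ + 2 := by exact_mod_cast hm
    push_cast at this
    linarith [Int.le_ceil r]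
  have : NeZero m := ⟨by rintro rfl; norm_num at hmr; linarith⟩
  rw [← Fintype.card_fin m] at hmr
  obtain ⟨i₀, hi₀⟩ := Finite.exists_min fun i => (Q i).d
  obtain ⟨j₀, hj₀⟩ := Finite.exists_min fun j => (Q' j).d
  rcases le_total (Q i₀).d (Q' j₀).d with h | h
  · exact false_of_forall_overlap_of_pairwise_yOverlap hr0 hmr hmr hQfat hQ'fat hQdisj hQ'disj
      (pairwise_yOverlap_of_forall_yOverlap (fun j => (hov i₀ j).2) fun j => h.trans (hj₀ j))
      hov
  · exact false_of_forall_overlap_of_pairwise_yOverlap hr0 hmr hmr hQ'fat hQfat hQ'disj hQdisj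
      (pairwise_yOverlap_of_forall_yOverlap (fun i => (hov i j₀).2.symm)
        fun i => h.trans (hi₀ i))
      fun j i => ⟨(hov i j).1.symm, (hov i j).2.symm⟩
end
end

section
/- For every real number r ≥ 1 there exist two families, each consisting of ⌈r⌉ + 1 pairwise disjoint axes-aligned r-fat rectangles, such that every rectangle of the first family overlaps every rectangle of the second family. -/
open MeasureTheory

noncomputable section

lemma vol_prod_Icc (a b c d : ℝ) :
    volume (Set.Icc a b ×ˢ Set.Icc c d : Set (ℝ × ℝ)) =
      ENNReal.ofReal (b - a) * ENNReal.ofReal (d - c) := by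
  rw [MeasureTheory.Measure.volume_eq_prod, MeasureTheory.Measure.prod_prod,
    Real.volume_Icc, Real.volume_Icc]

lemma inf_le_sup_of_add_one_le {x y : ℝ} (h : x + 1 ≤ y) :
    (x + 1) ⊓ (y + 1) ≤ x ⊔ y :=
  le_trans inf_le_left (le_trans h le_sup_right)

/-- Two families of `⌈r⌉+1` pairwise disjoint `r`-fat rectangles each such that
every rectangle of the first family overlaps every rectangle of the second. -/
theorem stmt4 (r : ℝ) (hr : 1 ≤ r) (m : ℕ) (hm : (m : ℤ) = ⌈r⌉ + 1) :
    ∃ Q Q' : Fin m → Rect,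
      (∀ i, (Q i).Fat r) ∧ (∀ i, (Q' i).Fat r) ∧
      (∀ i j, i ≠ j → volume ((Q i).set ∩ (Q j).set) = 0) ∧
      (∀ i j, i ≠ j → volume ((Q' i).set ∩ (Q' j).set) = 0) ∧
      (∀ i j, 0 < volume ((Q i).set ∩ (Q' j).set)) := by
  have hr0 : (0:ℝ) < r := by linarith
  have hc1 : (1:ℤ) ≤ ⌈r⌉ := Int.one_le_ceil_iff.mpr hr0
  have hm2 : 2 ≤ m := by
    have : (2:ℤ) ≤ (m:ℤ) := by omega
    exact_mod_cast this
  have hmR : ((m:ℝ)) = (⌈r⌉ : ℝ) + 1 := by exact_mod_cast hm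
  have hMr : (m:ℝ) - 2 < r := by
    have := Int.ceil_lt_add_one r
    linarith
  have hrM : r ≤ (m:ℝ) - 1 := by
    have := Int.le_ceil r
    linarith
  have hM2 : (0:ℝ) ≤ (m:ℝ) - 2 := by
    have : (2:ℝ) ≤ (m:ℝ) := by exact_mod_cast hm2
    linarith
  set M : ℝ := (m:ℝ) with hMdef
  set Δ : ℝ := r^2 - (M-2)^2 with hΔdef
  have hΔ : 0 < Δ := by
    rw [hΔdef]
    nlinarith [hM2, hMr]
  have hden : (0:ℝ) < 2*(r+M) := by linarith
  set ε : ℝ := Δ / (2*(r+M)) with hεdef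
  have hε : 0 < ε := div_pos hΔ hden
  set W : ℝ := M - 2 + ε with hWdef
  have hW : 0 < W := by rw [hWdef]; linarith
  set H : ℝ := W / r with hHdef
  have hH : 0 < H := div_pos hW hr0
  have hHW : H ≤ W := div_le_self (le_of_lt hW) hr
  have hrH : r * H = W := by rw [hHdef]; field_simp
  set X : ℝ := 1 - ε/2 with hXdef
  set c : ℝ := -H + ε with hcdef
  -- key inequality : (M-2)*H + ε < r
  have hεeq : ε * (2*(r+M)) = Δ := div_mul_cancel₀ _ (ne_of_gt hden)
  have hkey0 : ε * (M - 2 + r) < Δ := by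
    have hp : 0 < ε * (r + M + 2) := mul_pos hε (by linarith)
    have e : ε * (2*(r+M)) - ε * (M - 2 + r) = ε * (r + M + 2) := by ring
    linarith [hεeq, e, hp]
  have hkey1 : (M-2)*W + ε*r < r^2 := by
    have e3 : (M-2)*W = (M-2)*(M-2) + ε*(M-2) := by rw [hWdef]; ring
    have e4 : ε * (M - 2 + r) = ε*(M-2) + ε*r := by ring
    have e5 : Δ = r^2 - (M-2)*(M-2) := by rw [hΔdef]; ring
    linarith [hkey0, e3, e4, e5]
  have hkey : (M-2)*H + ε < r := by
    have heq : (M-2)*H + ε = ((M-2)*W + ε*r)/r := by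
      rw [hHdef]; field_simp
    rw [heq]
    rw [div_lt_iff₀ hr0]
    have e6 : r^2 = r*r := by ring
    linarith [hkey1, e6]
  -- bound on indices
  have hidx : ∀ i : Fin m, (i:ℝ) ≤ M - 1 := by
    intro i
    have h1 : (i:ℕ) + 1 ≤ m := i.isLt
    have h2 : ((i:ℕ):ℝ) + 1 ≤ (m:ℝ) := by exact_mod_cast h1
    rw [hMdef]
    linarith
  refine ⟨fun i => ⟨(i:ℝ), (i:ℝ)+1, 0, r, by linarith, hr0⟩,
          fun j => ⟨X, X+W, c + (j:ℝ)*H, c + ((j:ℝ)+1)*H, by linarith,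
            by
              have e : ((j:ℝ)+1)*H = (j:ℝ)*H + H := by ring
              linarith [e, hH]⟩, ?_, ?_, ?_, ?_, ?_⟩
  · intro i
    show max (((i:ℝ)+1) - (i:ℝ)) (r - 0) ≤ r * min (((i:ℝ)+1) - (i:ℝ)) (r - 0)
    have h1 : ((i:ℝ)+1) - (i:ℝ) = 1 := by ring
    have h2 : r - 0 = r := by ring
    rw [h1, h2, max_eq_right hr, min_eq_left hr, mul_one]
  · intro j
    show max ((X+W) - X) ((c + ((j:ℝ)+1)*H) - (c + (j:ℝ)*H)) ≤
      r * min ((X+W) - X) ((c + ((j:ℝ)+1)*H) - (c + (j:ℝ)*H))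
    have h1 : (X+W) - X = W := by ring
    have h2 : (c + ((j:ℝ)+1)*H) - (c + (j:ℝ)*H) = H := by ring
    rw [h1, h2, max_eq_left hHW, min_eq_right hHW, hrH]
  · intro i j hij
    show volume ((Set.Icc (i:ℝ) ((i:ℝ)+1) ×ˢ Set.Icc (0:ℝ) r) ∩
        (Set.Icc (j:ℝ) ((j:ℝ)+1) ×ˢ Set.Icc (0:ℝ) r)) = 0
    rw [Set.prod_inter_prod]
    simp only [Set.inter_self, Set.Icc_inter_Icc]
    rw [vol_prod_Icc]
    have hz : (((i:ℝ)+1) ⊓ ((j:ℝ)+1)) - ((i:ℝ) ⊔ (j:ℝ)) ≤ 0 := by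
      rcases Nat.lt_or_ge (i:ℕ) (j:ℕ) with h | h
      · have : (i:ℝ) + 1 ≤ (j:ℝ) := by exact_mod_cast Nat.succ_le_of_lt h
        have := inf_le_sup_of_add_one_le this
        linarith
      · have hji : (j:ℕ) < (i:ℕ) := by
          rcases Nat.lt_or_ge (j:ℕ) (i:ℕ) with h' | h'
          · exact h'
          · exact absurd (Fin.ext (le_antisymm h' h)) hij
        have : (j:ℝ) + 1 ≤ (i:ℝ) := by exact_mod_cast Nat.succ_le_of_lt hji
        have h2 := inf_le_sup_of_add_one_le this
        rw [inf_comm, sup_comm] at h2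
        linarith
    rw [ENNReal.ofReal_eq_zero.mpr hz, zero_mul]
  · intro i j hij
    show volume ((Set.Icc X (X+W) ×ˢ Set.Icc (c + (i:ℝ)*H) (c + ((i:ℝ)+1)*H)) ∩
        (Set.Icc X (X+W) ×ˢ Set.Icc (c + (j:ℝ)*H) (c + ((j:ℝ)+1)*H))) = 0
    rw [Set.prod_inter_prod]
    simp only [Set.inter_self, Set.Icc_inter_Icc]
    rw [vol_prod_Icc]
    have hz : ((c + ((i:ℝ)+1)*H) ⊓ (c + ((j:ℝ)+1)*H)) - ((c + (i:ℝ)*H) ⊔ (c + (j:ℝ)*H)) ≤ 0 := by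
      rcases Nat.lt_or_ge (i:ℕ) (j:ℕ) with h | h
      · have h1 : (i:ℝ) + 1 ≤ (j:ℝ) := by exact_mod_cast Nat.succ_le_of_lt h
        have h2 : c + ((i:ℝ)+1)*H ≤ c + (j:ℝ)*H := by
          have := mul_le_mul_of_nonneg_right h1 hH.le
          linarith
        have := le_trans (inf_le_left (a := c + ((i:ℝ)+1)*H) (b := c + ((j:ℝ)+1)*H))
          (le_trans h2 (le_sup_right (a := c + (i:ℝ)*H)))
        linarith
      · have hji : (j:ℕ) < (i:ℕ) := by
          rcases Nat.lt_or_ge (j:ℕ) (i:ℕ) with h' | h'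
          · exact h'
          · exact absurd (Fin.ext (le_antisymm h' h)) hij
        have h1 : (j:ℝ) + 1 ≤ (i:ℝ) := by exact_mod_cast Nat.succ_le_of_lt hji
        have h2 : c + ((j:ℝ)+1)*H ≤ c + (i:ℝ)*H := by
          have := mul_le_mul_of_nonneg_right h1 hH.le
          linarith
        have := le_trans (inf_le_right (a := c + ((i:ℝ)+1)*H) (b := c + ((j:ℝ)+1)*H))
          (le_trans h2 (le_sup_left (b := c + (j:ℝ)*H)))
        linarith
    rw [mul_comm, ENNReal.ofReal_eq_zero.mpr hz, zero_mul]
  · intro i j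
    show 0 < volume ((Set.Icc (i:ℝ) ((i:ℝ)+1) ×ˢ Set.Icc (0:ℝ) r) ∩
        (Set.Icc X (X+W) ×ˢ Set.Icc (c + (j:ℝ)*H) (c + ((j:ℝ)+1)*H)))
    rw [Set.prod_inter_prod, Set.Icc_inter_Icc, Set.Icc_inter_Icc, vol_prod_Icc]
    have hi := hidx i
    have hj := hidx j
    have hx : (i:ℝ) ⊔ X < (((i:ℝ)+1) ⊓ (X+W)) := by
      have hi0 : (0:ℝ) ≤ (i:ℝ) := Nat.cast_nonneg _
      apply max_lt <;> apply lt_min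
      · linarith
      · rw [hXdef, hWdef]; linarith
      · rw [hXdef]; linarith
      · linarith
    have hy : (0:ℝ) ⊔ (c + (j:ℝ)*H) < (r ⊓ (c + ((j:ℝ)+1)*H)) := by
      have hj0 : (0:ℝ) ≤ (j:ℝ) := Nat.cast_nonneg _
      have hjH : (j:ℝ)*H ≤ (M-1)*H := mul_le_mul_of_nonneg_right hj hH.le
      have e1 : ((j:ℝ)+1)*H = (j:ℝ)*H + H := by ring
      have e2 : (M-1)*H = (M-2)*H + H := by ring
      apply max_lt <;> apply lt_min
      · exact hr0
      · rw [hcdef]; linarith [e1, mul_nonneg hj0 hH.le, hε]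
      · rw [hcdef]; linarith [hjH, hkey, e2]
      · linarith [e1, hH]
    exact ENNReal.mul_pos (ENNReal.ofReal_pos.mpr (by linarith)).ne'
      (ENNReal.ofReal_pos.mpr (by linarith)).ne'
end
end

section
/- Let r ≥ 1, let Q₀ be an axes-aligned r-fat rectangle, and let F be a finite family of pairwise disjoint axes-aligned r-fat rectangles, each of which overlaps Q₀ and each of which has shorter side at least as long as the shorter side of Q₀. Then F contains at most 2⌈r⌉ + 2 rectangles. -/
open MeasureTheory

noncomputable section

lemma rect_vol (R S : Rect) :
    volume (R.set ∩ S.set)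
      = ENNReal.ofReal (min R.b S.b - max R.a S.a)
        * ENNReal.ofReal (min R.d S.d - max R.c S.c) := by
  have h : R.set ∩ S.set
      = Set.Icc (max R.a S.a) (min R.b S.b) ×ˢ Set.Icc (max R.c S.c) (min R.d S.d) := by
    rw [Rect.set, Rect.set, Set.prod_inter_prod, Set.Icc_inter_Icc, Set.Icc_inter_Icc]
  rw [h, Measure.volume_eq_prod, Measure.prod_prod, Real.volume_Icc, Real.volume_Icc]

lemma rect_disj_iff (R S : Rect) :
    volume (R.set ∩ S.set) = 0 ↔
      min R.b S.b ≤ max R.a S.a ∨ min R.d S.d ≤ max R.c S.c := by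
  rw [rect_vol, mul_eq_zero, ENNReal.ofReal_eq_zero, ENNReal.ofReal_eq_zero,
    sub_nonpos, sub_nonpos]

lemma rect_overlap_iff (R S : Rect) :
    0 < volume (R.set ∩ S.set) ↔
      max R.a S.a < min R.b S.b ∧ max R.c S.c < min R.d S.d := by
  rw [pos_iff_ne_zero, ne_eq, rect_disj_iff, not_or, not_le, not_le]

lemma key (r : ℝ) (hr : 1 ≤ r) (a0 b0 c0 d0 : ℝ) (hab : a0 < b0)
    (hfat0 : d0 - c0 ≤ r * (b0 - a0))
    (N : ℕ) (A B C D : Fin N → ℝ)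
    (hsX : ∀ i, b0 - a0 ≤ B i - A i) (hsY : ∀ i, b0 - a0 ≤ D i - C i)
    (hdisj : ∀ i j, i ≠ j →
      min (B i) (B j) ≤ max (A i) (A j) ∨ min (D i) (D j) ≤ max (C i) (C j))
    (hoX : ∀ i, max (A i) a0 < min (B i) b0)
    (hoY : ∀ i, max (C i) c0 < min (D i) d0) :
    (N : ℤ) ≤ 2 * ⌈r⌉ + 2 := by
  have hw : 0 < b0 - a0 := by linarith
  have hr1 : (1 : ℤ) ≤ ⌈r⌉ := by
    have h1 : (1 : ℝ) ≤ (⌈r⌉ : ℝ) := le_trans hr (Int.le_ceil r)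
    exact_mod_cast h1
  set g : Fin N → ℤ := fun i => max ⌈(C i - c0) / (b0 - a0)⌉ 0 with hgdef
  set m : Fin N → ℤ := fun i => (if A i ≤ a0 then 0 else ⌈r⌉ + 1) + g i with hmdef
  have hg_lb : ∀ i, 0 ≤ g i := fun i => le_max_right _ _
  have hg_ub : ∀ i, g i ≤ ⌈r⌉ := by
    intro i
    have hCi : C i < d0 := by
      have h1 : C i ≤ max (C i) c0 := le_max_left _ _
      have h2 : min (D i) d0 ≤ d0 := min_le_right _ _
      linarith [hoY i]
    have hx : (C i - c0) / (b0 - a0) ≤ r := by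
      rw [div_le_iff₀ hw]; nlinarith
    exact max_le (Int.ceil_le_ceil hx |>.trans (le_of_eq rfl)) (by omega)
  -- core: two rects in the same class with equal g cannot be y-separated
  have hc0D : ∀ i, c0 < D i := by
    intro i
    have h1 : c0 ≤ max (C i) c0 := le_max_right _ _
    have h2 : min (D i) d0 ≤ D i := min_le_left _ _
    linarith [hoY i]
  have hnd : ∀ i j, g i = g j → ¬ D i ≤ C j := by
    intro i j hgij hDC
    have h1 : C i - c0 + (b0 - a0) ≤ C j - c0 := by linarith [hsY i, hc0D i]
    have h3 : 0 < (C j - c0) / (b0 - a0) := div_pos (by linarith [hc0D i]) hw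
    have h4 : ⌈(C i - c0) / (b0 - a0)⌉ + 1 ≤ ⌈(C j - c0) / (b0 - a0)⌉ := by
      have he : (C i - c0) / (b0 - a0) + 1 = (C i - c0 + (b0 - a0)) / (b0 - a0) := by
        field_simp
      have := Int.ceil_le_ceil ((div_le_div_iff_of_pos_right hw).mpr h1)
      rw [← he, Int.ceil_add_one] at this
      exact this
    have h5 : 1 ≤ ⌈(C j - c0) / (b0 - a0)⌉ := Int.ceil_pos.mpr h3
    simp only [hgdef] at hgij
    omega
  have hm_inj : Function.Injective m := by
    intro i j hij
    by_contra hne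
    have hgi1 := hg_lb i
    have hgi2 := hg_ub i
    have hgj1 := hg_lb j
    have hgj2 := hg_ub j
    -- shared tail
    have tail : g i = g j → max (A i) (A j) < min (B i) (B j) → False := by
      intro hgij hx
      rcases hdisj i j hne with h | h
      · exact absurd h (not_le.mpr hx)
      · rw [min_le_iff] at h
        rcases h with h | h <;> rw [le_max_iff] at h <;> rcases h with h | h
        · linarith [hsY i, hw]
        · exact hnd i j hgij h
        · exact hnd j i hgij.symm h
        · linarith [hsY j, hw]
    have hBgt : ∀ k, max (A k) a0 < B k := by
      intro k
      have := hoX k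
      have h2 : min (B k) b0 ≤ B k := min_le_left _ _
      linarith
    have hAlt : ∀ k, A k < b0 := by
      intro k
      have := hoX k
      have h1 : A k ≤ max (A k) a0 := le_max_left _ _
      have h2 : min (B k) b0 ≤ b0 := min_le_right _ _
      linarith
    by_cases hAi : A i ≤ a0 <;> by_cases hAj : A j ≤ a0 <;>
      simp only [hmdef, hgdef, hAi, hAj, if_true, if_false] at hij
    · -- both left
      have hgij : g i = g j := by simp only [hgdef]; omega
      refine tail hgij ?_
      have hbi : a0 < B i := lt_of_le_of_lt (le_max_right _ _) (hBgt i)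
      have hbj : a0 < B j := lt_of_le_of_lt (le_max_right _ _) (hBgt j)
      exact lt_of_le_of_lt (max_le hAi hAj) (lt_min hbi hbj)
    · simp only [hgdef] at hgi1 hgi2 hgj1 hgj2; omega
    · simp only [hgdef] at hgi1 hgi2 hgj1 hgj2; omega
    · -- both right
      push_neg at hAi hAj
      have hgij : g i = g j := by simp only [hgdef]; omega
      refine tail hgij ?_
      have hbi : b0 < B i := by linarith [hsX i]
      have hbj : b0 < B j := by linarith [hsX j]
      exact lt_of_lt_of_le (max_lt (hAlt i) (hAlt j)) (le_of_lt (lt_min hbi hbj))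
  have hm_mem : ∀ i, m i ∈ Finset.Icc (0 : ℤ) (2 * ⌈r⌉ + 1) := by
    intro i
    have h1 := hg_lb i
    have h2 := hg_ub i
    simp only [Finset.mem_Icc, hmdef]
    split <;> omega
  have hcard : N ≤ (Finset.Icc (0 : ℤ) (2 * ⌈r⌉ + 1)).card := by
    have := Finset.card_le_card_of_injOn (s := Finset.univ) m (fun i _ => hm_mem i) hm_inj.injOn
    simpa using this
  rw [Int.card_Icc] at hcard
  omega

/-- A family of pairwise disjoint `r`-fat rectangles, each overlapping a fixed
`r`-fat rectangle `Q₀` and each at least as wide as `Q₀`, has at most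
`2⌈r⌉+2` members. -/
theorem stmt5 (r : ℝ) (hr : 1 ≤ r) (Q0 : Rect) (hQ0 : Q0.Fat r)
    (N : ℕ) (Q : Fin N → Rect)
    (hfat : ∀ i, (Q i).Fat r)
    (hdisj : ∀ i j, i ≠ j → volume ((Q i).set ∩ (Q j).set) = 0)
    (hover : ∀ i, 0 < volume ((Q i).set ∩ Q0.set))
    (hshort : ∀ i, Q0.short ≤ (Q i).short) :
    (N : ℤ) ≤ 2 * ⌈r⌉ + 2 := by
  have hover' : ∀ i, max (Q i).a Q0.a < min (Q i).b Q0.b ∧ max (Q i).c Q0.c < min (Q i).d Q0.d :=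
    fun i => (rect_overlap_iff _ _).mp (hover i)
  have hdisj' : ∀ i j, i ≠ j →
      min (Q i).b (Q j).b ≤ max (Q i).a (Q j).a ∨ min (Q i).d (Q j).d ≤ max (Q i).c (Q j).c :=
    fun i j hij => (rect_disj_iff _ _).mp (hdisj i j hij)
  have hshort' : ∀ i, Q0.short ≤ (Q i).b - (Q i).a :=
    fun i => (hshort i).trans (min_le_left _ _)
  have hshort'' : ∀ i, Q0.short ≤ (Q i).d - (Q i).c :=
    fun i => (hshort i).trans (min_le_right _ _)
  rcases le_total (Q0.b - Q0.a) (Q0.d - Q0.c) with hwh | hwh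
  · have hs : Q0.short = Q0.b - Q0.a := min_eq_left hwh
    have hl : Q0.long = Q0.d - Q0.c := max_eq_right hwh
    have hfat0 : Q0.d - Q0.c ≤ r * (Q0.b - Q0.a) := by
      have := hQ0; rw [Rect.Fat, hl, hs] at this; exact this
    exact key r hr Q0.a Q0.b Q0.c Q0.d Q0.hab hfat0 N
      (fun i => (Q i).a) (fun i => (Q i).b) (fun i => (Q i).c) (fun i => (Q i).d)
      (fun i => hs ▸ hshort' i) (fun i => hs ▸ hshort'' i) hdisj'
      (fun i => (hover' i).1) (fun i => (hover' i).2)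
  · have hs : Q0.short = Q0.d - Q0.c := min_eq_right hwh
    have hl : Q0.long = Q0.b - Q0.a := max_eq_left hwh
    have hfat0 : Q0.b - Q0.a ≤ r * (Q0.d - Q0.c) := by
      have := hQ0; rw [Rect.Fat, hl, hs] at this; exact this
    exact key r hr Q0.c Q0.d Q0.a Q0.b Q0.hcd hfat0 N
      (fun i => (Q i).c) (fun i => (Q i).d) (fun i => (Q i).a) (fun i => (Q i).b)
      (fun i => hs ▸ hshort'' i) (fun i => hs ▸ hshort' i)
      (fun i j hij => (hdisj' i j hij).symm)
      (fun i => (hover' i).2) (fun i => (hover' i).1)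
end
end

section
/- Let r ≥ 1, let n ≥ 2 be an integer, and set N = (2⌈r⌉+2)n − (3⌈r⌉+2). Let F₁,…,F_n be families of axes-aligned r-fat rectangles, each containing at least N rectangles, such that the rectangles within each family are pairwise disjoint. Then one can choose one rectangle Q_i ∈ F_i from each family so that Q₁,…,Q_n are pairwise disjoint. -/
open MeasureTheory

noncomputable section

/-! Induction on the number of families. Let `R` be a rectangle with the smallest shorter side
among all families, `t = R.short`. Two non-overlapping rectangles with sides at least `t` cannot
contain the same point of a grid of spacing `t`, and every rectangle overlapping `R` contains one
of `2 (⌈r⌉ + 1)` points of the grid anchored at the lower left corner of `R`, since `R` is `r`-fat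
with shorter side `t`. So choosing `R` for its family costs every other family at most
`2⌈r⌉ + 2` rectangles.

For two families with all cross pairs overlapping, the same count on one axis shows that the
family not containing `R` has two members separated by a horizontal line and two separated by
a vertical line; every rectangle of the other family crosses both lines, so two of them overlap. -/

namespace Rect

def Overlaps (P Q : Rect) : Prop := volume (P.set ∩ Q.set) ≠ 0

theorem overlaps_iff {P Q : Rect} :
    P.Overlaps Q ↔ (P.a < Q.b ∧ Q.a < P.b) ∧ (P.c < Q.d ∧ Q.c < P.d) := by
  have := P.hab; have := P.hcd; have := Q.hab; have := Q.hcd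
  rw [Overlaps, Rect.set, Rect.set, Set.prod_inter_prod, Set.Icc_inter_Icc, Set.Icc_inter_Icc,
    Measure.volume_eq_prod, Measure.prod_prod, Real.volume_Icc, Real.volume_Icc, ne_eq,
    mul_eq_zero, not_or, ENNReal.ofReal_eq_zero, ENNReal.ofReal_eq_zero, not_le, not_le,
    sub_pos, sub_pos, lt_min_iff, max_lt_iff, max_lt_iff, lt_min_iff, max_lt_iff, max_lt_iff]
  grind

instance : DecidableRel Overlaps := fun _ _ => decidable_of_iff _ overlaps_iff.symm

theorem overlaps_comm {P Q : Rect} : P.Overlaps Q ↔ Q.Overlaps P := by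
  rw [Overlaps, Overlaps, Set.inter_comm]

theorem overlaps_self (P : Rect) : P.Overlaps P :=
  overlaps_iff.2 ⟨⟨P.hab, P.hab⟩, ⟨P.hcd, P.hcd⟩⟩

theorem short_pos (R : Rect) : 0 < R.short :=
  lt_min (sub_pos.2 R.hab) (sub_pos.2 R.hcd)

end Rect

theorem lt_and_lt_of_crosses_gap {u v u' v' x y x' y' : ℝ} (hsep : ¬ (u < v' ∧ u' < v))
    (h₁ : x < v ∧ u < y) (h₁' : x < v' ∧ u' < y) (h₂ : x' < v ∧ u < y')
    (h₂' : x' < v' ∧ u' < y') : x < y' ∧ x' < y := by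
  grind

-- `C + gridIndex t C x * t` is the first point of the grid `C + tℕ` at or right of `max x C`.
def gridIndex (t C x : ℝ) : ℕ := ⌈(x - C) / t⌉₊

section Grid

variable {t C : ℝ}

theorem gridIndex_mono (ht : 0 ≤ t) : Monotone (gridIndex t C) := fun _ _ hxy =>
  Nat.ceil_mono (div_le_div_of_nonneg_right (sub_le_sub_right hxy C) ht)

theorem le_gridPoint (ht : 0 < t) (x : ℝ) : x ≤ C + gridIndex t C x * t := by
  have := (div_le_iff₀ ht).1 (Nat.le_ceil ((x - C) / t))
  rw [gridIndex]
  linarith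

theorem gridPoint_lt {x y : ℝ} (ht : 0 < t) (hC : C < y) (hxy : x + t ≤ y) :
    C + gridIndex t C x * t < y := by
  rcases le_or_gt ((x - C) / t) 0 with hx | hx
  · simpa [gridIndex, Nat.ceil_eq_zero.2 hx] using hC
  · have := (lt_div_iff₀ ht).1 (sub_lt_iff_lt_add.2 (Nat.ceil_lt_add_one hx.le))
    rw [gridIndex]
    linarith

theorem lt_and_lt_of_gridIndex_eq {x y x' y' : ℝ} (ht : 0 < t) (hC : C < y) (hC' : C < y')
    (hxy : x + t ≤ y) (hxy' : x' + t ≤ y') (h : gridIndex t C x = gridIndex t C x') :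
    x < y' ∧ x' < y := by
  have := le_gridPoint (C := C) ht x
  have := le_gridPoint (C := C) ht x'
  have := gridPoint_lt ht hC hxy
  have := gridPoint_lt ht hC' hxy'
  rw [h] at *
  constructor <;> linarith

theorem exists_lt_and_lt_of_gridIndex_lt_card {ι : Type*} {s : Finset ι} {lo hi : ι → ℝ}
    {D : ℝ} (ht : 0 < t) (hlen : ∀ i ∈ s, lo i + t ≤ hi i) (hC : ∀ i ∈ s, C < hi i)
    (hD : ∀ i ∈ s, lo i ≤ D) (hcard : gridIndex t C D + 1 < s.card) :
    ∃ i ∈ s, ∃ j ∈ s, i ≠ j ∧ lo i < hi j ∧ lo j < hi i := by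
  obtain ⟨i, hi, j, hj, hij, h⟩ := Finset.exists_ne_map_eq_of_card_lt_of_maps_to
    (t := Finset.range (gridIndex t C D + 1)) (by simpa using hcard)
    (f := fun i => gridIndex t C (lo i))
    (fun i hi => Finset.mem_range_succ_iff.2 (gridIndex_mono ht.le (hD i hi)))
  exact ⟨i, hi, j, hj, hij,
    lt_and_lt_of_gridIndex_eq ht (hC i hi) (hC j hj) (hlen i hi) (hlen j hj) h⟩

end Grid

namespace Rect

theorem gridIndex_short_sides (R : Rect) :
    gridIndex R.short R.a R.b = 1 ∨ gridIndex R.short R.c R.d = 1 := by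
  have h := R.short_pos
  rcases min_choice (R.b - R.a) (R.d - R.c) with hs | hs <;> rw [← short] at hs
  · left; rw [gridIndex, ← hs, div_self h.ne', Nat.ceil_one]
  · right; rw [gridIndex, ← hs, div_self h.ne', Nat.ceil_one]

theorem Fat.gridIndex_short_le {r : ℝ} {R : Rect} (hR : R.Fat r) :
    gridIndex R.short R.a R.b ≤ ⌈r⌉₊ ∧ gridIndex R.short R.c R.d ≤ ⌈r⌉₊ := by
  have h := R.short_pos
  exact ⟨Nat.ceil_mono ((div_le_iff₀ h).2 ((le_max_left _ _).trans hR)),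
    Nat.ceil_mono ((div_le_iff₀ h).2 ((le_max_right _ _).trans hR))⟩

theorem add_short_le_of_short_le {R Q : Rect} (h : R.short ≤ Q.short) :
    Q.a + R.short ≤ Q.b ∧ Q.c + R.short ≤ Q.d := by
  have := min_le_left (Q.b - Q.a) (Q.d - Q.c)
  have := min_le_right (Q.b - Q.a) (Q.d - Q.c)
  rw [← short] at *
  constructor <;> linarith

theorem Fat.card_overlaps_le {r : ℝ} {R : Rect} (hR : R.Fat r) {s : Finset Rect}
    (hshort : ∀ Q ∈ s, R.short ≤ Q.short) (hs : (s : Set Rect).Pairwise (¬ Overlaps · ·))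
    (hover : ∀ Q ∈ s, Q.Overlaps R) : s.card ≤ 2 * ⌈r⌉₊ + 2 := by
  have hgrid : (gridIndex R.short R.a R.b + 1) * (gridIndex R.short R.c R.d + 1) ≤
      2 * ⌈r⌉₊ + 2 := by
    obtain ⟨hW, hH⟩ := hR.gridIndex_short_le
    rcases R.gridIndex_short_sides with h | h <;> rw [h] <;> nlinarith
  by_contra! hcard
  have ht := R.short_pos
  obtain ⟨P, hP, Q, hQ, hPQ, h⟩ := Finset.exists_ne_map_eq_of_card_lt_of_maps_to
    (t := Finset.range (gridIndex R.short R.a R.b + 1) ×ˢ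
      Finset.range (gridIndex R.short R.c R.d + 1))
    (by simpa using hgrid.trans_lt hcard)
    (f := fun Q : Rect => (gridIndex R.short R.a Q.a, gridIndex R.short R.c Q.c))
    (fun Q hQ => by
      obtain ⟨⟨hx, -⟩, hy, -⟩ := overlaps_iff.1 (hover Q hQ)
      simp only [Finset.coe_product, Set.mem_prod, Finset.coe_range, Set.mem_Iio]
      exact ⟨Nat.lt_succ_of_le (gridIndex_mono ht.le hx.le),
        Nat.lt_succ_of_le (gridIndex_mono ht.le hy.le)⟩)
  obtain ⟨hPx, hPy⟩ := add_short_le_of_short_le (hshort P hP)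
  obtain ⟨hQx, hQy⟩ := add_short_le_of_short_le (hshort Q hQ)
  obtain ⟨⟨-, hP1⟩, -, hP2⟩ := overlaps_iff.1 (hover P hP)
  obtain ⟨⟨-, hQ1⟩, -, hQ2⟩ := overlaps_iff.1 (hover Q hQ)
  obtain ⟨h1, h2⟩ := Prod.mk.inj h
  exact hs hP hQ hPQ (overlaps_iff.2
    ⟨lt_and_lt_of_gridIndex_eq ht hP1 hQ1 hPx hQx h1,
      lt_and_lt_of_gridIndex_eq ht hP2 hQ2 hPy hQy h2⟩)

theorem Fat.card_le_card_filter_not_overlaps {r : ℝ} {R : Rect} (hR : R.Fat r)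
    {s : Finset Rect} (hshort : ∀ Q ∈ s, R.short ≤ Q.short)
    (hs : (s : Set Rect).Pairwise (¬ Overlaps · ·)) :
    s.card ≤ (s.filter (¬ ·.Overlaps R)).card + (2 * ⌈r⌉₊ + 2) := by
  have := hR.card_overlaps_le (s := s.filter (·.Overlaps R))
    (fun Q hQ => hshort Q (Finset.mem_filter.1 hQ).1)
    (hs.mono (Finset.coe_subset.2 (Finset.filter_subset _ _)))
    (fun Q hQ => (Finset.mem_filter.1 hQ).2)
  have := Finset.card_filter_add_card_filter_not (s := s) (·.Overlaps R)
  omega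

theorem Fat.exists_not_overlaps {r : ℝ} {R : Rect} (hR : R.Fat r) {A B : Finset Rect}
    (hRA : R ∈ A) (hshort : ∀ Q ∈ B, R.short ≤ Q.short)
    (hA : (A : Set Rect).Pairwise (¬ Overlaps · ·))
    (hB : (B : Set Rect).Pairwise (¬ Overlaps · ·))
    (hAcard : 1 < A.card) (hBcard : ⌈r⌉₊ + 2 ≤ B.card) :
    ∃ P ∈ A, ∃ Q ∈ B, ¬ P.Overlaps Q := by
  by_contra! hover
  have ht := R.short_pos
  obtain ⟨hW, hH⟩ := hR.gridIndex_short_le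
  have hRB (Q) (hQ : Q ∈ B) := overlaps_iff.1 (overlaps_comm.1 (hover R hRA Q hQ))
  obtain ⟨Q₁, hQ₁, Q₂, hQ₂, h12, hx12⟩ := exists_lt_and_lt_of_gridIndex_lt_card ht
    (fun Q hQ => (add_short_le_of_short_le (hshort Q hQ)).1)
    (fun Q hQ => (hRB Q hQ).1.2) (fun Q hQ => (hRB Q hQ).1.1.le) (by omega)
  obtain ⟨Q₃, hQ₃, Q₄, hQ₄, h34, hy34⟩ := exists_lt_and_lt_of_gridIndex_lt_card ht
    (fun Q hQ => (add_short_le_of_short_le (hshort Q hQ)).2)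
    (fun Q hQ => (hRB Q hQ).2.2) (fun Q hQ => (hRB Q hQ).2.1.le) (by omega)
  have hy12 := fun h => hB hQ₁ hQ₂ h12 (overlaps_iff.2 ⟨hx12, h⟩)
  have hx34 := fun h => hB hQ₃ hQ₄ h34 (overlaps_iff.2 ⟨h, hy34⟩)
  obtain ⟨P₁, hP₁, P₂, hP₂, hP⟩ := Finset.one_lt_card.1 hAcard
  have hPQ {P} (hP : P ∈ A) {Q} (hQ : Q ∈ B) := overlaps_iff.1 (hover P hP Q hQ)
  exact hA hP₁ hP₂ hP (overlaps_iff.2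
    ⟨lt_and_lt_of_crosses_gap hx34 (hPQ hP₁ hQ₃).1 (hPQ hP₁ hQ₄).1 (hPQ hP₂ hQ₃).1
        (hPQ hP₂ hQ₄).1,
      lt_and_lt_of_crosses_gap hy12 (hPQ hP₁ hQ₁).2 (hPQ hP₁ hQ₂).2 (hPQ hP₂ hQ₁).2
        (hPQ hP₂ hQ₂).2⟩)

end Rect

theorem exists_not_overlaps_of_card_le {r : ℝ} {A B : Finset Rect}
    (hfatA : ∀ Q ∈ A, Q.Fat r) (hfatB : ∀ Q ∈ B, Q.Fat r)
    (hA : (A : Set Rect).Pairwise (¬ Rect.Overlaps · ·))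
    (hB : (B : Set Rect).Pairwise (¬ Rect.Overlaps · ·))
    (hAcard : ⌈r⌉₊ + 2 ≤ A.card) (hBcard : ⌈r⌉₊ + 2 ≤ B.card) :
    ∃ P ∈ A, ∃ Q ∈ B, ¬ P.Overlaps Q := by
  classical
  obtain ⟨R, hR, hmin⟩ := (A ∪ B).exists_min_image Rect.short
    (Finset.card_pos.1 (by omega) |>.mono Finset.subset_union_left)
  rcases Finset.mem_union.1 hR with hRA | hRB
  · exact (hfatA R hRA).exists_not_overlaps hRA
      (fun Q hQ => hmin Q (Finset.mem_union_right _ hQ)) hA hB (by omega) hBcard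
  · obtain ⟨Q, hQ, P, hP, h⟩ := (hfatB R hRB).exists_not_overlaps hRB
      (fun Q hQ => hmin Q (Finset.mem_union_left _ hQ)) hB hA (by omega) hAcard
    exact ⟨P, hP, Q, hQ, fun hPQ => h (Rect.overlaps_comm.1 hPQ)⟩

theorem exists_pairwise_not_overlaps_choice {ι : Type*} [DecidableEq ι] {r : ℝ} (m : ℕ)
    (I : Finset ι) (hI : I.card = m + 2) (G : ι → Finset Rect)
    (hfat : ∀ i ∈ I, ∀ Q ∈ G i, Q.Fat r)
    (hG : ∀ i ∈ I, (G i : Set Rect).Pairwise (¬ Rect.Overlaps · ·))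
    (hcard : ∀ i ∈ I, (2 * ⌈r⌉₊ + 2) * m + ⌈r⌉₊ + 2 ≤ (G i).card) :
    ∃ g : ι → Rect, (∀ i ∈ I, g i ∈ G i) ∧
      (I : Set ι).Pairwise fun i j => ¬ (g i).Overlaps (g j) := by
  classical
  induction m generalizing I G with
  | zero =>
    obtain ⟨i, j, hij, rfl⟩ := Finset.card_eq_two.1 hI
    obtain ⟨P, hP, Q, hQ, hPQ⟩ := exists_not_overlaps_of_card_le
      (hfat i (by simp)) (hfat j (by simp)) (hG i (by simp)) (hG j (by simp))
      (by simpa using hcard i (by simp)) (by simpa using hcard j (by simp))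
    refine ⟨Function.update (fun _ => Q) i P, ?_, ?_⟩
    · simp [hP, hQ, hij.symm]
    · rw [Finset.coe_pair, Set.pairwise_pair]
      intro _
      simp [hij.symm, hPQ, Rect.overlaps_comm]
  | succ m ih =>
    obtain ⟨R, hR, hmin⟩ := (I.biUnion G).exists_min_image Rect.short <| by
      obtain ⟨i, hi⟩ := Finset.card_pos.1 (by omega : 0 < I.card)
      exact (Finset.card_pos.1 ((Nat.zero_lt_succ _).trans_le (hcard i hi))).mono
        (Finset.subset_biUnion_of_mem G hi)
    obtain ⟨i₀, hi₀, hRi₀⟩ := Finset.mem_biUnion.1 hR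
    have hshort (i) (hi : i ∈ I) (Q) (hQ : Q ∈ G i) : R.short ≤ Q.short :=
      hmin Q (Finset.mem_biUnion.2 ⟨i, hi, hQ⟩)
    obtain ⟨g, hgG, hg⟩ := ih (I.erase i₀) (by rw [Finset.card_erase_of_mem hi₀, hI]; rfl)
      (fun i => (G i).filter (¬ ·.Overlaps R))
      (fun i hi Q hQ => hfat i (Finset.mem_of_mem_erase hi) Q (Finset.mem_filter.1 hQ).1)
      (fun i hi => (hG i (Finset.mem_of_mem_erase hi)).mono
        (Finset.coe_subset.2 (Finset.filter_subset _ _)))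
      (fun i hi => by
        have hi := Finset.mem_of_mem_erase hi
        linarith [hcard i hi, (hfat i₀ hi₀ R hRi₀).card_le_card_filter_not_overlaps
          (hshort i hi) (hG i hi)])
    have hgR {j} (hj : j ∈ I) (hne : j ≠ i₀) :=
      Finset.mem_filter.1 (hgG j (Finset.mem_erase.2 ⟨hne, hj⟩))
    refine ⟨Function.update g i₀ R, fun i hi => ?_, fun i hi j hj hij => ?_⟩
    · rcases eq_or_ne i i₀ with rfl | hi₀
      · simpa using hRi₀
      · simpa [hi₀] using (hgR hi hi₀).1
    by_cases hi₀ : i = i₀ <;> by_cases hj₀ : j = i₀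
    · exact absurd (hi₀.trans hj₀.symm) hij
    · simpa [hi₀, hj₀, Rect.overlaps_comm] using (hgR hj hj₀).2
    · simpa [hi₀, hj₀] using (hgR hi hi₀).2
    · simpa [hi₀, hj₀] using
        hg (Finset.mem_erase.2 ⟨hi₀, hi⟩) (Finset.mem_erase.2 ⟨hj₀, hj⟩) hij

/-- From `n` families of at least `N = (2⌈r⌉+2)n − (3⌈r⌉+2)` pairwise disjoint
`r`-fat rectangles each, one can pick pairwise disjoint representatives. -/
theorem stmt6 (r : ℝ) (hr : 1 ≤ r) (n : ℕ) (hn : 2 ≤ n)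
    (N : ℕ) (hN : (N : ℤ) = (2 * ⌈r⌉ + 2) * n - (3 * ⌈r⌉ + 2))
    (M : Fin n → ℕ) (hM : ∀ i, N ≤ M i)
    (F : (i : Fin n) → Fin (M i) → Rect)
    (hfat : ∀ i j, (F i j).Fat r)
    (hdisj : ∀ i, ∀ j k, j ≠ k → volume ((F i j).set ∩ (F i k).set) = 0) :
    ∃ σ : (i : Fin n) → Fin (M i), ∀ i j, i ≠ j →
      volume ((F i (σ i)).set ∩ (F j (σ j)).set) = 0 := by
  classical
  obtain ⟨m, rfl⟩ := Nat.exists_eq_add_of_le' hn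
  have hNm : (2 * ⌈r⌉₊ + 2) * m + ⌈r⌉₊ + 2 = N := by
    have hk := Int.natCast_ceil_eq_ceil (zero_le_one.trans hr)
    zify
    rw [hN, ← hk]
    push_cast
    ring
  have hinj (i) : Function.Injective (F i) := fun j k hjk => by
    by_contra hne
    exact (F i k).overlaps_self (by simpa [hjk] using hdisj i j k hne)
  obtain ⟨g, hgF, hg⟩ := exists_pairwise_not_overlaps_choice m Finset.univ (by simp)
    (fun i => Finset.univ.image (F i))
    (fun i _ Q hQ => by obtain ⟨j, -, rfl⟩ := Finset.mem_image.1 hQ; exact hfat i j)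
    (fun i _ => by
      rw [Finset.coe_image]
      rintro _ ⟨j, -, rfl⟩ _ ⟨k, -, rfl⟩ hjk
      exact not_not.2 (hdisj i j k (ne_of_apply_ne _ hjk)))
    (fun i _ => by rw [Finset.card_image_of_injective _ (hinj i)]; simpa [hNm] using hM i)
  choose σ hσ using fun i => Finset.mem_image.1 (hgF i (Finset.mem_univ i))
  refine ⟨σ, fun i j hij => ?_⟩
  rw [(hσ i).2, (hσ j).2]
  exact not_not.1 (hg (Finset.mem_coe.2 (Finset.mem_univ i))
    (Finset.mem_coe.2 (Finset.mem_univ j)) hij)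
end
end

section
/- Let s > 0 and let Q₁, Q₂ be axes-aligned rectangles in ℝ². For i = 1, 2, let wrap(Q_i, s) denote the axes-aligned rectangle with the same center as Q_i whose side lengths are those of Q_i each increased by s. Then d(Q₁, Q₂) ≥ s if and only if the intersection of wrap(Q₁, s) and wrap(Q₂, s) has zero Lebesgue measure. -/
open MeasureTheory

noncomputable section

/-- The rectangle with the same center as `R` and side lengths increased by `s`. -/
def Rect.wrap (R : Rect) (s : ℝ) (hs : 0 ≤ s) : Rect where
  a := R.a - s / 2
  b := R.b + s / 2
  c := R.c - s / 2
  d := R.d + s / 2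
  hab := by have := R.hab; linarith
  hcd := by have := R.hcd; linarith

lemma close_pts (a b a' b' s : ℝ) (hs : 0 < s) (hab : a ≤ b) (hab' : a' ≤ b')
    (h1 : a < b' + s) (h2 : a' < b + s) :
    ∃ x ∈ Set.Icc a b, ∃ x' ∈ Set.Icc a' b', |x - x'| < s := by
  refine ⟨min b (max a a'), ⟨?_, min_le_left _ _⟩,
          min b' (max a a'), ⟨?_, min_le_left _ _⟩, ?_⟩
  · exact le_min hab (le_max_left _ _)
  · exact le_min hab' (le_max_right _ _)
  · rw [abs_lt]
    rcases le_total a a' with h | h <;> rcases le_total b a' with g | g <;>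
      rcases le_total b' a with g' | g' <;>
      simp [min_def, max_def] <;> split_ifs <;>
      first
        | (constructor <;> linarith)
        | linarith

/-- Two rectangles are at ℓ∞ distance at least `s` iff their `s`-wrappings
intersect in zero Lebesgue measure. -/
theorem stmt7 (s : ℝ) (hs : 0 < s) (Q1 Q2 : Rect) :
    SepSets s Q1.set Q2.set ↔
      volume ((Q1.wrap s hs.le).set ∩ (Q2.wrap s hs.le).set) = 0 := by
  obtain ⟨a1, b1, c1, d1, hab1, hcd1⟩ := Q1
  obtain ⟨a2, b2, c2, d2, hab2, hcd2⟩ := Q2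
  have hset : ∀ (a b c d : ℝ) (hab : a < b) (hcd : c < d),
      (Rect.mk a b c d hab hcd).set = Set.Icc a b ×ˢ Set.Icc c d := fun _ _ _ _ _ _ => rfl
  simp only [Rect.wrap, hset] at *
  rw [Set.prod_inter_prod, Set.Icc_inter_Icc, Set.Icc_inter_Icc]
  have hvol : ∀ (A B C D : ℝ), volume (Set.Icc A B ×ˢ Set.Icc C D)
      = ENNReal.ofReal (B - A) * ENNReal.ofReal (D - C) := by
    intro A B C D
    rw [MeasureTheory.Measure.volume_eq_prod, MeasureTheory.Measure.prod_prod,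
      Real.volume_Icc, Real.volume_Icc]
  rw [hvol, mul_eq_zero, ENNReal.ofReal_eq_zero, ENNReal.ofReal_eq_zero]
  constructor
  · intro hsep
    by_contra hcon
    push_neg at hcon
    obtain ⟨hx, hy⟩ := hcon
    have hx' : max (a1 - s/2) (a2 - s/2) < min (b1 + s/2) (b2 + s/2) := by linarith
    have hy' : max (c1 - s/2) (c2 - s/2) < min (d1 + s/2) (d2 + s/2) := by linarith
    have hx1 : a1 < b2 + s := by
      nlinarith [lt_of_le_of_lt (le_max_left (a1 - s/2) (a2 - s/2)) (lt_of_lt_of_le hx' (min_le_right _ _))]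
    have hx2 : a2 < b1 + s := by
      nlinarith [lt_of_le_of_lt (le_max_right (a1 - s/2) (a2 - s/2)) (lt_of_lt_of_le hx' (min_le_left _ _))]
    have hy1 : c1 < d2 + s := by
      nlinarith [lt_of_le_of_lt (le_max_left (c1 - s/2) (c2 - s/2)) (lt_of_lt_of_le hy' (min_le_right _ _))]
    have hy2 : c2 < d1 + s := by
      nlinarith [lt_of_le_of_lt (le_max_right (c1 - s/2) (c2 - s/2)) (lt_of_lt_of_le hy' (min_le_left _ _))]
    obtain ⟨x, hxm, x', hxm', hxlt⟩ := close_pts a1 b1 a2 b2 s hs hab1.le hab2.le hx1 hx2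
    obtain ⟨y, hym, y', hym', hylt⟩ := close_pts c1 d1 c2 d2 s hs hcd1.le hcd2.le hy1 hy2
    have := hsep (x, y) (Set.mk_mem_prod hxm hym) (x', y') (Set.mk_mem_prod hxm' hym')
    have : s ≤ max |x - x'| |y - y'| := this
    rcases max_cases |x - x'| |y - y'| with ⟨he, _⟩ | ⟨he, _⟩ <;> rw [he] at this <;> linarith
  · intro hc p hp q hq
    obtain ⟨hp1, hp2⟩ := hp
    obtain ⟨hq1, hq2⟩ := hq
    simp only [Set.mem_Icc] at hp1 hp2 hq1 hq2
    rcases hc with hc | hc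
    · -- x-degenerate: min(b1,b2)+s/2 ≤ max(a1,a2)-s/2
      have h : min (b1 + s/2) (b2 + s/2) ≤ max (a1 - s/2) (a2 - s/2) := by linarith
      have : b1 + s ≤ a2 ∨ b2 + s ≤ a1 := by
        rcases min_le_iff.mp h with h' | h' <;> rcases le_max_iff.mp (le_refl (max (a1 - s/2) (a2 - s/2))) with _ | _ <;>
        rcases max_cases (a1 - s/2) (a2 - s/2) with ⟨he, hle⟩ | ⟨he, hle⟩ <;> rw [he] at h' <;>
          first
            | (left; linarith)
            | (right; linarith)
            | linarith
      refine le_trans ?_ (le_max_left |p.1 - q.1| |p.2 - q.2|)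
      rcases this with h' | h'
      · exact le_abs.mpr (Or.inr (by linarith [hp1.2, hq1.1]))
      · exact le_abs.mpr (Or.inl (by linarith [hp1.1, hq1.2]))
    · have h : min (d1 + s/2) (d2 + s/2) ≤ max (c1 - s/2) (c2 - s/2) := by linarith
      have : d1 + s ≤ c2 ∨ d2 + s ≤ c1 := by
        rcases min_le_iff.mp h with h' | h' <;>
        rcases max_cases (c1 - s/2) (c2 - s/2) with ⟨he, hle⟩ | ⟨he, hle⟩ <;> rw [he] at h' <;>
          first
            | (left; linarith)
            | (right; linarith)
            | linarith
      refine le_trans ?_ (le_max_right |p.1 - q.1| |p.2 - q.2|)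
      rcases this with h' | h'
      · exact le_abs.mpr (Or.inr (by linarith [hp2.2, hq2.1]))
      · exact le_abs.mpr (Or.inl (by linarith [hp2.1, hq2.2]))
end
end

section
/- Let s ≥ 0 and let v be a valuation given by an integrable density that is s-normalized. Let R be an axes-aligned rectangle, let V = v(R), and let p, q ≥ 1 be integers with p + q ≤ V. Then at least one of the following holds: (i) there exists x ∈ ℝ such that v(R ∩ {(u,w) : u ≤ x}) ≥ p and v(R ∩ {(u,w) : u ≥ x + s}) ≥ q; or (ii) setting m = ⌈(⌊V⌋ − p − q)/2⌉, there exist axes-aligned rectangles Q₁,…,Q_m ⊆ R with v(Q_j) ≥ 1 for all j, such that for every j ∈ {1,…,m−1} the maximal y-coordinate of Q_j plus s is at most the minimal y-coordinate of Q_{j+1}. -/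
open MeasureTheory

noncomputable section

/-!
Cut `R` at the abscissa `x₀` where the left part has value exactly `p`; this exists because the
value of `R ∩ {u ≤ x}` depends continuously on `x`. If the part to the right of `x₀ + s` is worth
less than `q`, the open strip `x₀ < u < x₀ + s` is worth more than `V - p - q ≥ 2m - 1`. Its value
lies in the normalizing rectangles; two of them meeting the strip are horizontally closer than
`s`, so they are `s`-separated vertically and can be listed from bottom to top. Grouping
consecutive pieces greedily into blocks of value in `[1, 2)` (every piece is worth at most `1`)
gives `m` blocks, and their bounding boxes inside `R` form the stack.
-/

open Set Filter

theorem List.exists_blocks_one_le_sum {α : Type*} (w : α → ℝ) {l : List α}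
    (hw : ∀ a ∈ l, w a ≤ 1) {m : ℕ} (hm : 2 * m - 1 < (l.map w).sum) :
    ∃ bs : List (List α), bs.length = m ∧ bs.flatten <+: l ∧ ∀ b ∈ bs, 1 ≤ (b.map w).sum := by
  -- `acc` is the unfinished block. A block is closed as soon as it is worth `1`; it is then worth
  -- less than `2`, since `acc` is worth less than `1` and every weight is at most `1`.
  suffices key : ∀ (acc : List α) (m : ℕ), (acc.map w).sum < 1 →
      2 * m - 1 < (acc.map w).sum + (l.map w).sum →
      ∃ bs : List (List α), bs.length = m ∧ bs.flatten <+: acc ++ l ∧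
        ∀ b ∈ bs, 1 ≤ (b.map w).sum by
    simpa using key [] m (by simp) (by simpa using hm)
  clear hm
  induction l with
  | nil =>
    intro acc m hacc hm
    obtain rfl : m = 0 := by
      have : (m : ℝ) < 1 := by simp only [List.map_nil, List.sum_nil] at hm; linarith
      exact Nat.lt_one_iff.mp (by exact_mod_cast this)
    exact ⟨[], rfl, List.nil_prefix, by simp⟩
  | cons a l ih =>
    intro acc m hacc hm
    have hwa := hw a List.mem_cons_self
    have hw' : ∀ b ∈ l, w b ≤ 1 := fun b hb => hw b (List.mem_cons_of_mem a hb)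
    simp only [List.map_cons, List.sum_cons] at hm
    have hsum_snoc : ((acc ++ [a]).map w).sum = (acc.map w).sum + w a := by simp
    by_cases hclose : 1 ≤ (acc.map w).sum + w a
    · cases m with
      | zero => exact ⟨[], rfl, List.nil_prefix, by simp⟩
      | succ m =>
        obtain ⟨bs, hlen, hpre, hbs⟩ := ih hw' [] m (by simp)
          (by push_cast at hm; simp only [List.map_nil, List.sum_nil, zero_add]; linarith)
        refine ⟨(acc ++ [a]) :: bs, by simp [hlen], by simpa using hpre, ?_⟩
        simpa [List.forall_mem_cons, hsum_snoc] using ⟨hclose, hbs⟩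
    · obtain ⟨bs, hlen, hpre, hbs⟩ :=
        ih hw' (acc ++ [a]) m (by simp only [hsum_snoc]; linarith)
          (by simp only [hsum_snoc]; linarith)
      exact ⟨bs, hlen, by simpa using hpre, hbs⟩

section Measure

variable {β : Type*} [MeasurableSpace β]

lemma volume_fst_preimage_singleton (x : ℝ) :
    (volume : Measure (ℝ × ℝ)) (Prod.fst ⁻¹' {x}) = 0 := by
  rw [← prod_univ, Measure.volume_eq_prod, Measure.prod_prod, Real.volume_singleton, zero_mul]

theorem exists_measureReal_inter_fst_le_eq (μ : Measure (ℝ × β)) [IsFiniteMeasure μ]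
    (hμ : ∀ x, μ (Prod.fst ⁻¹' {x}) = 0) {S : Set (ℝ × β)} {a b : ℝ} (hab : a ≤ b)
    (hS : S ⊆ Prod.fst ⁻¹' Icc a b) {t : ℝ} (ht : t ∈ Icc 0 (μ.real S)) :
    ∃ x, μ.real (S ∩ {z | z.1 ≤ x}) = t := by
  set ρ := (μ.restrict S).map Prod.fst
  have hρ : ∀ y, ρ.real (Icc a y) = μ.real (S ∩ {z | z.1 ≤ y}) := by
    intro y
    rw [map_measureReal_apply measurable_fst measurableSet_Icc,
      measureReal_restrict_apply (measurable_fst measurableSet_Icc)]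
    congr 1
    ext z
    exact ⟨fun ⟨⟨_, hz⟩, hzS⟩ => ⟨hzS, hz⟩, fun ⟨hzS, hz⟩ => ⟨⟨(hS hzS).1, hz⟩, hzS⟩⟩
  have : NullSingletonClass ρ := ⟨fun y => by
    rw [Measure.map_apply measurable_fst (measurableSet_singleton y)]
    exact nonpos_iff_eq_zero.1 ((Measure.restrict_apply_le _ _).trans (hμ y).le)⟩
  -- `y ↦ ρ.real (Icc a y)` is the primitive of `1` with respect to the atomless measure `ρ`
  have hcont : ContinuousOn (fun y => μ.real (S ∩ {z | z.1 ≤ y})) (Icc a b) := by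
    simpa [setIntegral_const, hρ] using
      intervalIntegral.continuousOn_primitive_Icc (μ := ρ) (a := a) (b := b)
        (integrableOn_const (C := (1 : ℝ)))
  have ha : μ.real (S ∩ {z | z.1 ≤ a}) = 0 := by
    rw [← hρ, Icc_self, measureReal_def, measure_singleton, ENNReal.toReal_zero]
  have hb : μ.real (S ∩ {z | z.1 ≤ b}) = μ.real S :=
    congrArg μ.real (inter_eq_left.2 fun z hz => (hS hz).2)
  obtain ⟨x, -, hx⟩ := intermediate_value_Icc hab hcont (by rwa [ha, hb])
  exact ⟨x, hx⟩

lemma measureReal_le_left_add_strip_add_right (μ : Measure (ℝ × β)) [IsFiniteMeasure μ]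
    (A : Set (ℝ × β)) (x s : ℝ) :
    μ.real A ≤ μ.real (A ∩ {z | z.1 ≤ x}) + μ.real (A ∩ {z | x < z.1 ∧ z.1 < x + s}) +
      μ.real (A ∩ {z | x + s ≤ z.1}) := by
  have hsub : A ⊆ (A ∩ {z | z.1 ≤ x}) ∪ (A ∩ {z | x < z.1 ∧ z.1 < x + s}) ∪
      (A ∩ {z | x + s ≤ z.1}) := by
    intro z hz
    rcases le_or_gt z.1 x with h1 | h1
    · exact Or.inl (Or.inl ⟨hz, h1⟩)
    rcases lt_or_ge z.1 (x + s) with h2 | h2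
    · exact Or.inl (Or.inr ⟨hz, h1, h2⟩)
    · exact Or.inr ⟨hz, h2⟩
  calc μ.real A ≤ _ := measureReal_mono hsub
    _ ≤ _ := measureReal_union_le _ _
    _ ≤ _ := by gcongr; exact measureReal_union_le _ _

lemma measureReal_le_sum_inter {α ι : Type*} [MeasurableSpace α] [Fintype ι]
    (μ : Measure α) [IsFiniteMeasure μ] {U : ι → Set α} (hU : μ (⋃ i, U i)ᶜ = 0) (S : Set α) :
    μ.real S ≤ ∑ i, μ.real (S ∩ U i) := by
  have hsub : S ⊆ (⋃ i, S ∩ U i) ∪ (⋃ i, U i)ᶜ := by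
    rw [← inter_iUnion]
    exact fun z hz => (em (z ∈ ⋃ i, U i)).imp (fun h => ⟨hz, h⟩) id
  calc μ.real S ≤ μ.real (⋃ i, S ∩ U i) + μ.real (⋃ i, U i)ᶜ :=
        (measureReal_mono hsub).trans (measureReal_union_le _ _)
    _ ≤ ∑ i, μ.real (S ∩ U i) := by
        rw [measureReal_def _ (⋃ i, U i)ᶜ, hU, ENNReal.toReal_zero, add_zero]
        exact measureReal_iUnion_fintype_le _

end Measure

section Rectangles

lemma Rect.measurableSet_set (R : Rect) : MeasurableSet R.set :=
  measurableSet_Icc.prod measurableSet_Icc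

lemma SepSets.d_add_le_or_d_add_le {s : ℝ} {A B : Rect} (h : SepSets s A.set B.set)
    {z w : Pt} (hz : z ∈ A.set) (hw : w ∈ B.set) (hzw : |z.1 - w.1| < s) :
    A.d + s ≤ B.c ∨ B.d + s ≤ A.c := by
  have hy : ∀ y ∈ Icc A.c A.d, ∀ y' ∈ Icc B.c B.d, s ≤ |y - y'| := fun y hy y' hy' =>
    (le_max_iff.1 (h (z.1, y) ⟨hz.1, hy⟩ (w.1, y') ⟨hw.1, hy'⟩)).resolve_left hzw.not_ge
  by_cases hAB : A.d < B.c
  · have := hy A.d ⟨A.hcd.le, le_rfl⟩ B.c ⟨le_rfl, B.hcd.le⟩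
    rw [abs_of_neg (sub_neg.2 hAB)] at this
    left; linarith
  by_cases hBA : B.d < A.c
  · have := hy A.c ⟨le_rfl, A.hcd.le⟩ B.d ⟨B.hcd.le, le_rfl⟩
    rw [abs_of_pos (sub_pos.2 hBA)] at this
    right; linarith
  rw [not_lt] at hAB hBA
  have := hy (max A.c B.c) ⟨le_max_left _ _, max_le A.hcd.le hAB⟩
    (max A.c B.c) ⟨le_max_right _ _, max_le hBA B.hcd.le⟩
  rw [sub_self, abs_zero] at this
  linarith [abs_nonneg (z.1 - w.1)]

lemma lt_and_lt_of_measureReal_Icc_prod_Icc_pos {μ : Measure Pt} (hμ : μ ≪ volume)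
    {a b c d : ℝ} (h : 0 < μ.real (Icc a b ×ˢ Icc c d)) : a < b ∧ c < d := by
  by_contra hdeg
  have hvol : volume (Icc a b ×ˢ Icc c d) = 0 := by
    rw [Measure.volume_eq_prod, Measure.prod_prod, Real.volume_Icc, Real.volume_Icc]
    rcases not_and_or.1 hdeg with hab | hcd
    · rw [ENNReal.ofReal_eq_zero.2 (sub_nonpos.2 (not_lt.1 hab)), zero_mul]
    · rw [ENNReal.ofReal_eq_zero.2 (sub_nonpos.2 (not_lt.1 hcd)), mul_zero]
  rw [measureReal_def, hμ hvol, ENNReal.toReal_zero] at h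
  exact h.false

def IsStack (μ : Measure Pt) (R : Rect) (s : ℝ) {m : ℕ} (Q : Fin m → Rect) : Prop :=
  (∀ j, (Q j).set ⊆ R.set) ∧ (∀ j, 1 ≤ μ.real (Q j).set) ∧
    ∀ j : Fin m, ∀ h : (j : ℕ) + 1 < m, (Q j).d + s ≤ (Q ⟨(j : ℕ) + 1, h⟩).c

variable {ι : Type*} (μ : Measure Pt) [IsFiniteMeasure μ] (R : Rect) {S : Set Pt} {T : ι → Rect}

lemma exists_rect_of_block (hμ : μ ≪ volume) (hSR : S ⊆ R.set) (hS : MeasurableSet S)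
    {b : List ι} (hb : b.Pairwise fun i j => (T i).d < (T j).c)
    (h1 : 1 ≤ (b.map fun i => μ.real (S ∩ (T i).set)).sum) :
    ∃ B : Rect, B.set ⊆ R.set ∧ 1 ≤ μ.real B.set ∧
      (∃ i ∈ b, (T i).c ≤ B.c) ∧ ∃ i ∈ b, B.d ≤ (T i).d := by
  classical
  have hnd : b.Nodup := hb.imp fun {i j} h hij => by subst hij; linarith [(T i).hcd]
  set F := b.toFinset
  have hF : F.Nonempty := by
    rcases b with _ | ⟨i, b⟩
    · simp only [List.map_nil, List.sum_nil] at h1; linarith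
    · exact ⟨i, by simp [F]⟩
  set α := F.inf' hF fun i => (T i).c
  set β := F.sup' hF fun i => (T i).d
  have hdisj : (F : Set ι).PairwiseDisjoint fun i => S ∩ (T i).set := by
    have : b.Pairwise fun i j => Disjoint (S ∩ (T i).set) (S ∩ (T j).set) :=
      hb.imp fun h => Disjoint.mono inter_subset_right inter_subset_right
        (disjoint_left.2 fun z hzi hzj => by linarith [hzi.2.2, hzj.2.1])
    rw [Set.PairwiseDisjoint, List.coe_toFinset]
    exact this.set_pairwise
  have hsub : (⋃ i ∈ F, S ∩ (T i).set) ⊆ Icc R.a R.b ×ˢ Icc (max R.c α) (min R.d β) := by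
    simp only [iUnion_subset_iff]
    intro i hi z ⟨hzS, hzT⟩
    obtain ⟨hzx, hzy⟩ := hSR hzS
    exact ⟨hzx, max_le hzy.1 ((F.inf'_le _ hi).trans hzT.2.1),
      le_min hzy.2 (hzT.2.2.trans (F.le_sup' (fun i => (T i).d) hi))⟩
  have hval : 1 ≤ μ.real (Icc R.a R.b ×ˢ Icc (max R.c α) (min R.d β)) := calc
    1 ≤ (b.map fun i => μ.real (S ∩ (T i).set)).sum := h1
    _ = ∑ i ∈ F, μ.real (S ∩ (T i).set) := (List.sum_toFinset _ hnd).symm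
    _ = μ.real (⋃ i ∈ F, S ∩ (T i).set) :=
        (measureReal_biUnion_finset hdisj fun i _ => hS.inter (T i).measurableSet_set).symm
    _ ≤ _ := measureReal_mono hsub
  obtain ⟨-, hcd⟩ := lt_and_lt_of_measureReal_Icc_prod_Icc_pos hμ (by linarith)
  refine ⟨⟨R.a, R.b, max R.c α, min R.d β, R.hab, hcd⟩,
    fun z hz => ⟨hz.1, (le_max_left _ _).trans hz.2.1, hz.2.2.trans (min_le_left _ _)⟩,
    hval, ?_, ?_⟩
  · obtain ⟨i, hi, hα⟩ := F.exists_mem_eq_inf' hF fun i => (T i).c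
    exact ⟨i, List.mem_toFinset.1 hi, hα ▸ le_max_right _ _⟩
  · obtain ⟨i, hi, hβ⟩ := F.exists_mem_eq_sup' hF fun i => (T i).d
    exact ⟨i, List.mem_toFinset.1 hi, hβ ▸ min_le_right _ _⟩

lemma exists_stack_of_list (hμ : μ ≪ volume) (hSR : S ⊆ R.set) (hS : MeasurableSet S) {s : ℝ}
    (hs : 0 < s) (hT : ∀ i, μ.real (T i).set ≤ 1) {l : List ι}
    (hl : l.Pairwise fun i j => (T i).d + s ≤ (T j).c) {m : ℕ}
    (hm : 2 * m - 1 < (l.map fun i => μ.real (S ∩ (T i).set)).sum) :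
    ∃ Q : Fin m → Rect, IsStack μ R s Q := by
  obtain ⟨bs, hlen, hpre, hbs⟩ := List.exists_blocks_one_le_sum _
    (fun i _ => (measureReal_mono inter_subset_right).trans (hT i)) hm
  obtain ⟨hwithin, hbetween⟩ := List.pairwise_flatten.1 (hl.sublist hpre.sublist)
  have hbox : ∀ b ∈ bs, ∃ B : Rect, B.set ⊆ R.set ∧ 1 ≤ μ.real B.set ∧
      (∃ i ∈ b, (T i).c ≤ B.c) ∧ ∃ i ∈ b, B.d ≤ (T i).d := fun b hb =>
    exists_rect_of_block μ R hμ hSR hS ((hwithin b hb).imp fun h => by linarith) (hbs b hb)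
  have : Nonempty Rect := ⟨R⟩
  choose! B hBR hB1 hBc hBd using hbox
  refine ⟨fun j => B bs[j.1], fun j => hBR _ (List.getElem_mem _),
    fun j => hB1 _ (List.getElem_mem _), fun j hj => ?_⟩
  obtain ⟨i, hi, hid⟩ := hBd _ (List.getElem_mem (l := bs) (n := j.1) (by omega))
  obtain ⟨i', hi', hic⟩ := hBc _ (List.getElem_mem (l := bs) (n := j.1 + 1) (by omega))
  have := List.pairwise_iff_getElem.1 hbetween j.1 (j.1 + 1) (by omega) (by omega)
    (Nat.lt_succ_self _) i hi i' hi'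
  dsimp only
  linarith

lemma exists_list_pairwise_of_sep (T : ι → Rect) {s : ℝ} (hs : 0 ≤ s) (I : Finset ι)
    (hI : ∀ i ∈ I, ∀ j ∈ I, i ≠ j → (T i).d + s ≤ (T j).c ∨ (T j).d + s ≤ (T i).c) :
    ∃ l : List ι, l.Perm I.toList ∧ l.Pairwise fun i j => (T i).d + s ≤ (T j).c := by
  set l := I.toList.mergeSort fun i j => decide ((T i).c ≤ (T j).c)
  have hperm : l.Perm I.toList := List.mergeSort_perm _ _
  have hsorted : l.Pairwise fun i j => (T i).c ≤ (T j).c := by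
    simpa using List.pairwise_mergeSort (le := fun i j => decide ((T i).c ≤ (T j).c))
      (fun _ _ _ h h' => by simp only [decide_eq_true_eq] at *; linarith)
      (fun i j => by simpa using le_total _ _) I.toList
  refine ⟨l, hperm, (hsorted.and (hperm.nodup_iff.2 I.nodup_toList)).imp_of_mem
    fun {i j} hi hj ⟨hc, hne⟩ => ?_⟩
  rcases hI i (by simpa using hperm.subset hi) j (by simpa using hperm.subset hj) hne with h | h
  · exact h
  · linarith [(T j).hcd]

theorem exists_stack_of_strip [Fintype ι] (hμ : μ ≪ volume) {s : ℝ} (hs : 0 < s)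
    (hsep : Pairwise fun i j => SepSets s (T i).set (T j).set) (hT : ∀ i, μ.real (T i).set ≤ 1)
    (hcover : μ (⋃ i, (T i).set)ᶜ = 0) (x : ℝ) {m : ℕ}
    (hm : 2 * m - 1 < μ.real (R.set ∩ {z | x < z.1 ∧ z.1 < x + s})) :
    ∃ Q : Fin m → Rect, IsStack μ R s Q := by
  classical
  set S := R.set ∩ {z : Pt | x < z.1 ∧ z.1 < x + s}
  have hS : MeasurableSet S := R.measurableSet_set.inter
    ((measurable_fst measurableSet_Ioi).inter (measurable_fst measurableSet_Iio))
  set w := fun i => μ.real (S ∩ (T i).set)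
  set I := Finset.univ.filter fun i => w i ≠ 0
  have hmeets : ∀ i ∈ I, ∃ z ∈ (T i).set, x < z.1 ∧ z.1 < x + s := by
    intro i hi
    obtain ⟨z, ⟨-, hz⟩, hzT⟩ := nonempty_of_measureReal_ne_zero (Finset.mem_filter.1 hi).2
    exact ⟨z, hzT, hz⟩
  have hI : ∀ i ∈ I, ∀ j ∈ I, i ≠ j → (T i).d + s ≤ (T j).c ∨ (T j).d + s ≤ (T i).c := by
    intro i hi j hj hij
    obtain ⟨z, hz, hz1, hz2⟩ := hmeets i hi
    obtain ⟨z', hz', hz1', hz2'⟩ := hmeets j hj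
    exact (hsep hij).d_add_le_or_d_add_le hz hz' (abs_sub_lt_iff.2 ⟨by linarith, by linarith⟩)
  obtain ⟨l, hperm, hl⟩ := exists_list_pairwise_of_sep T hs.le I hI
  refine exists_stack_of_list μ R hμ inter_subset_left hS hs hT hl (hm.trans_le ?_)
  calc μ.real S ≤ ∑ i, w i := measureReal_le_sum_inter μ hcover S
    _ = ∑ i ∈ I, w i := (Finset.sum_filter_ne_zero _).symm
    _ = (l.map w).sum := by rw [(hperm.map w).sum_eq, Finset.sum_map_toList]

theorem exists_cut_or_stack [Fintype ι] (hμ : μ ≪ volume) {s : ℝ}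
    (hsep : Pairwise fun i j => SepSets s (T i).set (T j).set) (hT : ∀ i, μ.real (T i).set ≤ 1)
    (hcover : μ (⋃ i, (T i).set)ᶜ = 0) {p q : ℝ} (hp : 0 ≤ p) (hq : 0 ≤ q)
    (hpq : p + q ≤ μ.real R.set) {m : ℕ} (hm : 2 * m - 1 ≤ μ.real R.set - p - q) :
    (∃ x, p ≤ μ.real (R.set ∩ {z | z.1 ≤ x}) ∧ q ≤ μ.real (R.set ∩ {z | x + s ≤ z.1})) ∨
      ∃ Q : Fin m → Rect, IsStack μ R s Q := by
  obtain ⟨x, hx⟩ := exists_measureReal_inter_fst_le_eq μ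
    (fun x => hμ (volume_fst_preimage_singleton x)) R.hab.le (fun z hz => hz.1)
    (S := R.set) (t := p) ⟨hp, by linarith⟩
  by_cases hright : q ≤ μ.real (R.set ∩ {z | x + s ≤ z.1})
  · exact Or.inl ⟨x, hx.ge, hright⟩
  have hstrip : μ.real R.set - p - q < μ.real (R.set ∩ {z | x < z.1 ∧ z.1 < x + s}) := by
    linarith [measureReal_le_left_add_strip_add_right μ R.set x s]
  -- the strip is nonempty, hence `0 < s`
  obtain ⟨z, -, hz1, hz2⟩ := nonempty_of_measureReal_ne_zero (by linarith : μ.real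
    (R.set ∩ {z | x < z.1 ∧ z.1 < x + s}) ≠ 0)
  exact Or.inr (exists_stack_of_strip μ R hμ (by linarith) hsep hT hcover x (by linarith))

end Rectangles

lemma val_eq_measureReal {f : Pt → ℝ} (hint : Integrable f) (hpos : ∀ p, 0 ≤ f p) (Z : Set Pt) :
    val f Z = (volume.withDensity fun z => ENNReal.ofReal (f z)).real Z := by
  rw [val, integral_eq_lintegral_of_nonneg_ae (Eventually.of_forall hpos)
    hint.aestronglyMeasurable.restrict, measureReal_def, withDensity_apply']

lemma withDensity_ofReal_compl_eq_zero {α : Type*} [MeasurableSpace α] (μ : Measure α)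
    {f : α → ℝ} {U : Set α} (hU : MeasurableSet U) (hf : ∀ p ∉ U, f p = 0) :
    μ.withDensity (fun z => ENNReal.ofReal (f z)) Uᶜ = 0 := by
  rw [withDensity_apply _ hU.compl]
  exact setLIntegral_eq_zero hU.compl fun z hz => by simp [hf z hz]

lemma two_mul_sub_one_le_of_eq_ceil_half {k m : ℤ} (hm : m = ⌈(k : ℝ) / 2⌉) : 2 * m - 1 ≤ k := by
  have h := Int.ceil_lt_add_one ((k : ℝ) / 2)
  rw [← hm] at h
  have : ((2 * m : ℤ) : ℝ) < k + 2 := by push_cast; linarith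
  have : 2 * m < k + 2 := by exact_mod_cast this
  omega

theorem stmt10_general (s : ℝ) (f : Pt → ℝ) (hint : Integrable f)
    (hpos : ∀ p, 0 ≤ f p) (hnorm : SNormalized s f)
    (R : Rect) (V : ℝ) (hV : V = val f R.set)
    (p q : ℕ) (hpq : (p : ℝ) + q ≤ V)
    (m : ℕ) (hm : (m : ℤ) = ⌈(((⌊V⌋ - p - q : ℤ) : ℝ)) / 2⌉) :
    (∃ x : ℝ, (p : ℝ) ≤ val f (R.set ∩ {z : Pt | z.1 ≤ x}) ∧
       (q : ℝ) ≤ val f (R.set ∩ {z : Pt | x + s ≤ z.1})) ∨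
    (∃ Q : Fin m → Rect,
       (∀ j, (Q j).set ⊆ R.set) ∧
       (∀ j, 1 ≤ val f ((Q j).set)) ∧
       (∀ j : Fin m, ∀ h : (j : ℕ) + 1 < m,
         (Q j).d + s ≤ (Q ⟨(j : ℕ) + 1, h⟩).c)) := by
  obtain ⟨N, T, hsep, hT, hvanish⟩ := hnorm
  set μ := volume.withDensity fun z => ENNReal.ofReal (f z)
  have : IsFiniteMeasure μ := isFiniteMeasure_withDensity_ofReal hint.2
  have hval : ∀ Z, val f Z = μ.real Z := val_eq_measureReal hint hpos
  have h2m : 2 * (m : ℝ) - 1 ≤ V - p - q := by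
    have := two_mul_sub_one_le_of_eq_ceil_half hm
    have : ((2 * m - 1 : ℤ) : ℝ) ≤ ((⌊V⌋ - p - q : ℤ) : ℝ) := by exact_mod_cast this
    push_cast at this
    linarith [Int.floor_le V]
  simp only [hval] at hT hV ⊢
  subst hV
  exact exists_cut_or_stack μ R (withDensity_absolutelyContinuous _ _) (fun i j h => hsep i j h) hT
    (withDensity_ofReal_compl_eq_zero _ (MeasurableSet.iUnion fun i =>
      (T i).measurableSet_set) hvanish) p.cast_nonneg q.cast_nonneg hpq h2m

/-- Existence of a vertical `p`:`q`-value cut or a vertical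
`⌈(⌊V⌋−p−q)/2⌉`-rectangle stack for an `s`-normalized valuation. -/
theorem stmt10 (s : ℝ) (hs : 0 ≤ s) (f : Pt → ℝ) (hint : Integrable f)
    (hpos : ∀ p, 0 ≤ f p) (hnorm : SNormalized s f)
    (R : Rect) (V : ℝ) (hV : V = val f R.set)
    (p q : ℕ) (hp : 1 ≤ p) (hq : 1 ≤ q) (hpq : (p : ℝ) + q ≤ V)
    (m : ℕ) (hm : (m : ℤ) = ⌈(((⌊V⌋ - p - q : ℤ) : ℝ)) / 2⌉) :
    (∃ x : ℝ, (p : ℝ) ≤ val f (R.set ∩ {z : Pt | z.1 ≤ x}) ∧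
       (q : ℝ) ≤ val f (R.set ∩ {z : Pt | x + s ≤ z.1})) ∨
    (∃ Q : Fin m → Rect,
       (∀ j, (Q j).set ⊆ R.set) ∧
       (∀ j, 1 ≤ val f ((Q j).set)) ∧
       (∀ j : Fin m, ∀ h : (j : ℕ) + 1 < m,
         (Q j).d + s ≤ (Q ⟨(j : ℕ) + 1, h⟩).c)) :=
  stmt10_general s f hint hpos hnorm R V hV p q hpq m hm
end
end

section
/- Let s ≥ 0 and let v₁, v₂ be valuations given by integrable densities, each s-normalized. Let R be an axes-aligned rectangle with v₁(R) ≥ 7 and v₂(R) ≥ 7. Then there exist axes-aligned rectangles A₁, A₂ ⊆ R with d(A₁, A₂) ≥ s such that v₁(A₁) ≥ 1 and v₂(A₂) ≥ 1. -/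
open MeasureTheory

noncomputable section

/-! Both agents' values are integrated along the x-axis. Cut off, for each agent, a left and a
right slab worth exactly 1. Either agent 1's left slab and agent 2's right slab (or the other way
round) are `s` apart, or the middle part of one agent, say agent 2, worth at least 5, lies in a
vertical strip of width less than `s`. Every half-open band of that strip of height `s` has
ℓ∞-diameter less than `s`, so it meets at most one of agent 2's normalizing rectangles and is worth
at most 1 to agent 2. Cutting horizontally where agent 1's bottom slab is worth 1, agent 2 then
keeps at least 1 of the strip beyond a gap of height `s`, above or below the cut. -/

open Set

def SepDivisible (s : ℝ) (f1 f2 : Pt → ℝ) (L : Set Pt) : Prop :=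
  ∃ A1 A2 : Rect, A1.set ⊆ L ∧ A2.set ⊆ L ∧ SepSets s A1.set A2.set ∧
    1 ≤ val f1 A1.set ∧ 1 ≤ val f2 A2.set

theorem SepSets.symm {s : ℝ} {A B : Set Pt} (h : SepSets s A B) : SepSets s B A := by
  intro p hp q hq
  simpa only [linfDist, abs_sub_comm] using h q hq p hp

theorem SepDivisible.symm {s : ℝ} {f1 f2 : Pt → ℝ} {L : Set Pt} (h : SepDivisible s f1 f2 L) :
    SepDivisible s f2 f1 L :=
  let ⟨A1, A2, h1, h2, hsep, hv1, hv2⟩ := h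
  ⟨A2, A1, h2, h1, hsep.symm, hv2, hv1⟩

theorem sepSets_Icc_prod {s a u v b : ℝ} (hgap : s ≤ v - u) (S T : Set ℝ) :
    SepSets s (Icc a u ×ˢ S) (Icc v b ×ˢ T) := by
  rintro p ⟨hp, -⟩ q ⟨hq, -⟩
  refine le_max_of_le_left ?_
  rw [abs_sub_comm]
  exact hgap.trans ((by linarith [hp.2, hq.1] : v - u ≤ q.1 - p.1).trans (le_abs_self _))

theorem sepSets_prod_Icc {s c u v d : ℝ} (hgap : s ≤ v - u) (S T : Set ℝ) :
    SepSets s (S ×ˢ Icc c u) (T ×ˢ Icc v d) := by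
  rintro p ⟨-, hp⟩ q ⟨-, hq⟩
  refine le_max_of_le_right ?_
  rw [abs_sub_comm]
  exact hgap.trans ((by linarith [hp.2, hq.1] : v - u ≤ q.2 - p.2).trans (le_abs_self _))

/-- Read with `F`, `G` the cumulative values of two agents along an axis: the first agent
gets `[a, u]`, the second `[v, b]`, across a gap of width at least `s`. -/
def SepCut (s : ℝ) (F G : ℝ → ℝ) (a b : ℝ) : Prop :=
  ∃ u v, a < u ∧ u ≤ v ∧ v < b ∧ s ≤ v - u ∧ 1 ≤ F u - F a ∧ 1 ≤ G b - G v

def HasHeavyThinPart (s : ℝ) (G : ℝ → ℝ) (a b : ℝ) : Prop :=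
  ∃ p q, a ≤ p ∧ p < q ∧ q ≤ b ∧ q - p < s ∧ 5 ≤ G q - G p

section OneDim

variable {F G : ℝ → ℝ} {s a b : ℝ}

theorem exists_sub_eq_of_continuous (hF : Continuous F) (hab : a ≤ b) {t : ℝ} (h0 : 0 ≤ t)
    (ht : t ≤ F b - F a) : ∃ x ∈ Icc a b, F x - F a = t := by
  obtain ⟨x, hx, hFx⟩ := intermediate_value_Icc hab hF.continuousOn
    (⟨by linarith, by linarith⟩ : F a + t ∈ Icc (F a) (F b))
  exact ⟨x, hx, by linarith⟩

theorem sepCut_or_hasHeavyThinPart (hF : Continuous F) (hFm : Monotone F) (hG : Continuous G)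
    (hGm : Monotone G) (hab : a ≤ b) (hF7 : 7 ≤ F b - F a) (hG7 : 7 ≤ G b - G a) :
    SepCut s F G a b ∨ HasHeavyThinPart s G a b ∨
      SepCut s G F a b ∨ HasHeavyThinPart s F a b := by
  obtain ⟨x1, hx1, hFx1⟩ := exists_sub_eq_of_continuous hF hab zero_le_one (by linarith)
  obtain ⟨x2, hx2, hGx2⟩ := exists_sub_eq_of_continuous hG hab zero_le_one (by linarith)
  obtain ⟨y1, hy1, hFy1⟩ :=
    exists_sub_eq_of_continuous hF hab (t := F b - F a - 1) (by linarith) (by linarith)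
  obtain ⟨y2, hy2, hGy2⟩ :=
    exists_sub_eq_of_continuous hG hab (t := G b - G a - 1) (by linarith) (by linarith)
  wlog h12 : x1 ≤ x2 generalizing F G x1 x2 y1 y2
  · have := this hG hGm hF hFm hG7 hF7 x2 hx2 hGx2 x1 hx1 hFx1 y2 hy2 hGy2 y1 hy1 hFy1
      (le_of_not_ge h12)
    tauto
  have hax1 : a < x1 := hx1.1.lt_of_ne (by rintro rfl; simp at hFx1)
  have hx2y2 : x2 < y2 := lt_of_not_ge fun h => by linarith [hGm h]
  have hy2b : y2 < b := hy2.2.lt_of_ne (by rintro rfl; linarith)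
  -- Without the gap, `G` gains at least 5 on `[x2, y2] ⊆ [x1, x1 + s)`.
  by_cases hgap : x1 + s ≤ y2
  · exact Or.inl ⟨x1, y2, hax1, by linarith, hy2b, by linarith, by linarith, by linarith⟩
  · exact Or.inr (Or.inl ⟨x2, y2, hx2.1, hx2y2, hy2.2, by linarith, by linarith⟩)

theorem sepCut_or_sepCut_of_increment_le_one (hs : 0 ≤ s) (hF : Continuous F) (hGm : Monotone G)
    (hab : a ≤ b) (hF2 : 2 ≤ F b - F a) (hG5 : 5 ≤ G b - G a)
    (hinc : ∀ u, G (u + s) - G u ≤ 1) : SepCut s F G a b ∨ SepCut s G F a b := by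
  obtain ⟨u, hu, hFu⟩ := exists_sub_eq_of_continuous hF hab zero_le_one (by linarith)
  have hau : a < u := hu.1.lt_of_ne (by rintro rfl; simp at hFu)
  by_cases hGu : G u - G a ≤ 3
  · have hus : u + s < b := lt_of_not_ge fun h => by linarith [hGm h, hinc u]
    exact Or.inl ⟨u, u + s, hau, by linarith, hus, by linarith, by linarith,
      by linarith [hinc u]⟩
  · have hsu : a < u - s := lt_of_not_ge fun h => by
      linarith [hGm (show u ≤ a + s by linarith), hinc a]
    have hub : u < b := hu.2.lt_of_ne (by rintro rfl; linarith)
    have hGus := hinc (u - s)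
    rw [sub_add_cancel] at hGus
    exact Or.inr ⟨u - s, u, hsu, by linarith, hub, by linarith, by linarith, by linarith⟩

end OneDim

def cumX (f : Pt → ℝ) (c d : ℝ) (t : ℝ) : ℝ := ∫ x in 0..t, ∫ y in Icc c d, f (x, y)

def cumY (f : Pt → ℝ) (a b : ℝ) (t : ℝ) : ℝ := ∫ y in 0..t, ∫ x in Icc a b, f (x, y)

section TwoDim

variable {f f1 f2 : Pt → ℝ} {s a b c d : ℝ}

theorem integrable_integral_snd (hf : Integrable f) (T : Set ℝ) :
    Integrable fun x => ∫ y in T, f (x, y) := by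
  have h : Integrable f (volume.restrict (univ ×ˢ T)) := hf.restrict
  rw [Measure.volume_eq_prod, ← Measure.prod_restrict, Measure.restrict_univ] at h
  exact h.integral_prod_left

theorem integrable_integral_fst (hf : Integrable f) (S : Set ℝ) :
    Integrable fun y => ∫ x in S, f (x, y) := by
  have h : Integrable f (volume.restrict (S ×ˢ univ)) := hf.restrict
  rw [Measure.volume_eq_prod, ← Measure.prod_restrict, Measure.restrict_univ] at h
  exact h.integral_prod_right

theorem val_prod_eq_integral_integral_symm (hf : Integrable f) (S T : Set ℝ) :
    val f (S ×ˢ T) = ∫ y in T, ∫ x in S, f (x, y) := by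
  have h : Integrable f (volume.restrict (S ×ˢ T)) := hf.restrict
  rw [Measure.volume_eq_prod, ← Measure.prod_restrict] at h
  rw [val, Measure.volume_eq_prod, ← Measure.prod_restrict, integral_prod_symm f h]

theorem val_prod_eq_integral_integral (hf : Integrable f) (S T : Set ℝ) :
    val f (S ×ˢ T) = ∫ x in S, ∫ y in T, f (x, y) :=
  setIntegral_prod f hf.integrableOn

theorem val_Icc_prod_eq_cumX_sub (hf : Integrable f) {r t : ℝ} (hrt : r ≤ t) (c d : ℝ) :
    val f (Icc r t ×ˢ Icc c d) = cumX f c d t - cumX f c d r := by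
  have hint := integrable_integral_snd hf (Icc c d)
  rw [val_prod_eq_integral_integral hf, integral_Icc_eq_integral_Ioc,
    ← intervalIntegral.integral_of_le hrt, cumX, cumX,
    intervalIntegral.integral_interval_sub_left hint.intervalIntegrable hint.intervalIntegrable]

theorem val_prod_Ioc_eq_cumY_sub (hf : Integrable f) (a b : ℝ) {r t : ℝ} (hrt : r ≤ t) :
    val f (Icc a b ×ˢ Ioc r t) = cumY f a b t - cumY f a b r := by
  have hint := integrable_integral_fst hf (Icc a b)
  rw [val_prod_eq_integral_integral_symm hf, ← intervalIntegral.integral_of_le hrt, cumY, cumY,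
    intervalIntegral.integral_interval_sub_left hint.intervalIntegrable hint.intervalIntegrable]

theorem val_prod_Icc_eq_cumY_sub (hf : Integrable f) (a b : ℝ) {r t : ℝ} (hrt : r ≤ t) :
    val f (Icc a b ×ˢ Icc r t) = cumY f a b t - cumY f a b r := by
  rw [val_prod_eq_integral_integral_symm hf, integral_Icc_eq_integral_Ioc,
    ← val_prod_eq_integral_integral_symm hf, val_prod_Ioc_eq_cumY_sub hf a b hrt]

theorem continuous_cumX (hf : Integrable f) (c d : ℝ) : Continuous (cumX f c d) :=
  (integrable_integral_snd hf _).continuous_primitive 0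

theorem continuous_cumY (hf : Integrable f) (a b : ℝ) : Continuous (cumY f a b) :=
  (integrable_integral_fst hf _).continuous_primitive 0

theorem monotone_cumX (hf : Integrable f) (hn : ∀ p, 0 ≤ f p) (c d : ℝ) :
    Monotone (cumX f c d) := fun _ _ hrt =>
  sub_nonneg.mp (val_Icc_prod_eq_cumX_sub hf hrt c d ▸ integral_nonneg hn)

theorem monotone_cumY (hf : Integrable f) (hn : ∀ p, 0 ≤ f p) (a b : ℝ) :
    Monotone (cumY f a b) := fun _ _ hrt =>
  sub_nonneg.mp (val_prod_Icc_eq_cumY_sub hf a b hrt ▸ integral_nonneg hn)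

theorem val_mono (hf : Integrable f) (hn : ∀ p, 0 ≤ f p) {A B : Set Pt} (hAB : A ⊆ B) :
    val f A ≤ val f B :=
  setIntegral_mono_set hf.integrableOn (ae_of_all _ hn) hAB.eventuallyLE

/-- A set of ℓ∞-diameter less than `s` meets at most one of the normalizing rectangles. -/
theorem val_le_one_of_linfDist_lt (hf : Integrable f) (hn : ∀ p, 0 ≤ f p)
    (hnorm : SNormalized s f) {T : Set Pt} (hT : MeasurableSet T)
    (hdiam : ∀ z ∈ T, ∀ w ∈ T, linfDist z w < s) : val f T ≤ 1 := by
  obtain ⟨N, Q, hsep, hval, hzero⟩ := hnorm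
  by_cases hmeet : ∃ i, ∃ z ∈ T, z ∈ (Q i).set
  · obtain ⟨i, z, hzT, hzQ⟩ := hmeet
    have hvanish : ∀ w ∈ T \ (T ∩ (Q i).set), f w = 0 := by
      rintro w ⟨hwT, hwQ⟩
      refine hzero w fun hwU => ?_
      obtain ⟨j, hwj⟩ := mem_iUnion.mp hwU
      obtain rfl : j = i := by
        by_contra hji
        exact (hsep j i hji w hwj z hzQ).not_gt (hdiam w hwT z hzT)
      exact hwQ ⟨hwT, hwj⟩
    calc val f T = val f (T ∩ (Q i).set) :=
          setIntegral_eq_of_subset_of_forall_sdiff_eq_zero hT inter_subset_left hvanish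
      _ ≤ val f (Q i).set := val_mono hf hn inter_subset_right
      _ ≤ 1 := hval i
  · push Not at hmeet
    refine (setIntegral_eq_zero_of_forall_eq_zero fun z hz => hzero z ?_).trans_le zero_le_one
    simpa only [mem_iUnion, not_exists] using fun i => hmeet i z hz

theorem cumY_add_sub_le_one (hf : Integrable f) (hn : ∀ p, 0 ≤ f p) (hnorm : SNormalized s f)
    {p q : ℝ} (hw : q - p < s) (hs : 0 ≤ s) (u : ℝ) :
    cumY f p q (u + s) - cumY f p q u ≤ 1 := by
  rw [← val_prod_Ioc_eq_cumY_sub hf p q (by linarith)]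
  refine val_le_one_of_linfDist_lt hf hn hnorm (measurableSet_Icc.prod measurableSet_Ioc) ?_
  rintro z ⟨hz1, hz2⟩ w ⟨hw1, hw2⟩
  exact max_lt (abs_sub_lt_iff.mpr ⟨by linarith [hz1.2, hw1.1], by linarith [hz1.1, hw1.2]⟩)
    (abs_sub_lt_iff.mpr ⟨by linarith [hz2.2, hw2.1], by linarith [hz2.1, hw2.2]⟩)

theorem sepDivisible_of_sepCut_cumX (hf1 : Integrable f1) (hf2 : Integrable f2) (hcd : c < d)
    (h : SepCut s (cumX f1 c d) (cumX f2 c d) a b) :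
    SepDivisible s f1 f2 (Icc a b ×ˢ Icc c d) := by
  obtain ⟨u, v, hau, huv, hvb, hgap, h1, h2⟩ := h
  refine ⟨⟨a, u, c, d, hau, hcd⟩, ⟨v, b, c, d, hvb, hcd⟩,
    prod_mono (Icc_subset_Icc_right (huv.trans hvb.le)) subset_rfl,
    prod_mono (Icc_subset_Icc_left (hau.le.trans huv)) subset_rfl,
    sepSets_Icc_prod hgap _ _, ?_, ?_⟩
  · rwa [Rect.set, val_Icc_prod_eq_cumX_sub hf1 hau.le]
  · rwa [Rect.set, val_Icc_prod_eq_cumX_sub hf2 hvb.le]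

theorem sepDivisible_of_sepCut_cumY (hf1 : Integrable f1) (hf2 : Integrable f2)
    {p q p' q' : ℝ} (hpq : p < q) (hp'q' : p' < q') (hsub : Icc p q ⊆ Icc a b)
    (hsub' : Icc p' q' ⊆ Icc a b) (h : SepCut s (cumY f1 p q) (cumY f2 p' q') c d) :
    SepDivisible s f1 f2 (Icc a b ×ˢ Icc c d) := by
  obtain ⟨u, v, hcu, huv, hvd, hgap, h1, h2⟩ := h
  refine ⟨⟨p, q, c, u, hpq, hcu⟩, ⟨p', q', v, d, hp'q', hvd⟩,
    prod_mono hsub (Icc_subset_Icc_right (huv.trans hvd.le)),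
    prod_mono hsub' (Icc_subset_Icc_left (hcu.le.trans huv)),
    sepSets_prod_Icc hgap _ _, ?_, ?_⟩
  · rwa [Rect.set, val_prod_Icc_eq_cumY_sub hf1 p q hcu.le]
  · rwa [Rect.set, val_prod_Icc_eq_cumY_sub hf2 p' q' hvd.le]

theorem sepDivisible_of_heavy_thin_strip (hf1 : Integrable f1) (hf2 : Integrable f2)
    (hn2 : ∀ p, 0 ≤ f2 p) (hnorm2 : SNormalized s f2) (hcd : c ≤ d)
    {p q : ℝ} (hap : a ≤ p) (hpq : p < q) (hqb : q ≤ b) (hw : q - p < s)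
    (hv1 : 2 ≤ val f1 (Icc a b ×ˢ Icc c d)) (hv2 : 5 ≤ val f2 (Icc p q ×ˢ Icc c d)) :
    SepDivisible s f1 f2 (Icc a b ×ˢ Icc c d) := by
  have hs : 0 ≤ s := by linarith
  have hsub : Icc p q ⊆ Icc a b := Icc_subset_Icc hap hqb
  rw [val_prod_Icc_eq_cumY_sub hf1 a b hcd] at hv1
  rw [val_prod_Icc_eq_cumY_sub hf2 p q hcd] at hv2
  rcases sepCut_or_sepCut_of_increment_le_one hs (continuous_cumY hf1 a b)
      (monotone_cumY hf2 hn2 p q) hcd hv1 hv2 (cumY_add_sub_le_one hf2 hn2 hnorm2 hw hs) with h | h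
  · exact sepDivisible_of_sepCut_cumY hf1 hf2 (hap.trans_lt (hpq.trans_le hqb)) hpq subset_rfl
      hsub h
  · exact (sepDivisible_of_sepCut_cumY hf2 hf1 hpq (hap.trans_lt (hpq.trans_le hqb)) hsub
      subset_rfl h).symm

end TwoDim

theorem stmt11_general (s : ℝ) (f1 f2 : Pt → ℝ)
    (hi1 : Integrable f1) (hi2 : Integrable f2)
    (hn1 : ∀ p, 0 ≤ f1 p) (hn2 : ∀ p, 0 ≤ f2 p)
    (hs1 : SNormalized s f1) (hs2 : SNormalized s f2)
    (R : Rect) (hv1 : 7 ≤ val f1 R.set) (hv2 : 7 ≤ val f2 R.set) :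
    ∃ A1 A2 : Rect, A1.set ⊆ R.set ∧ A2.set ⊆ R.set ∧
      SepSets s A1.set A2.set ∧
      1 ≤ val f1 A1.set ∧ 1 ≤ val f2 A2.set := by
  obtain ⟨a, b, c, d, hab, hcd⟩ := R
  change 7 ≤ val f1 (Icc a b ×ˢ Icc c d) at hv1
  change 7 ≤ val f2 (Icc a b ×ˢ Icc c d) at hv2
  change SepDivisible s f1 f2 (Icc a b ×ˢ Icc c d)
  have hF7 := val_Icc_prod_eq_cumX_sub hi1 hab.le c d ▸ hv1
  have hG7 := val_Icc_prod_eq_cumX_sub hi2 hab.le c d ▸ hv2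
  rcases sepCut_or_hasHeavyThinPart (s := s) (continuous_cumX hi1 c d) (monotone_cumX hi1 hn1 c d)
      (continuous_cumX hi2 c d) (monotone_cumX hi2 hn2 c d) hab.le hF7 hG7 with
    h | ⟨p, q, hap, hpq, hqb, hw, h5⟩ | h | ⟨p, q, hap, hpq, hqb, hw, h5⟩
  · exact sepDivisible_of_sepCut_cumX hi1 hi2 hcd h
  · exact sepDivisible_of_heavy_thin_strip hi1 hi2 hn2 hs2 hcd.le hap hpq hqb hw
      (by linarith) (val_Icc_prod_eq_cumX_sub hi2 hpq.le c d ▸ h5)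
  · exact (sepDivisible_of_sepCut_cumX hi2 hi1 hcd h).symm
  · exact (sepDivisible_of_heavy_thin_strip hi2 hi1 hn1 hs1 hcd.le hap hpq hqb hw
      (by linarith) (val_Icc_prod_eq_cumX_sub hi1 hpq.le c d ▸ h5)).symm

/-- Two `s`-normalized agents valuing a rectangle at least 7 each can each get
an `s`-separated sub-rectangle of value at least 1. -/
theorem stmt11 (s : ℝ) (hs : 0 ≤ s) (f1 f2 : Pt → ℝ)
    (hi1 : Integrable f1) (hi2 : Integrable f2)
    (hn1 : ∀ p, 0 ≤ f1 p) (hn2 : ∀ p, 0 ≤ f2 p)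
    (hs1 : SNormalized s f1) (hs2 : SNormalized s f2)
    (R : Rect) (hv1 : 7 ≤ val f1 R.set) (hv2 : 7 ≤ val f2 R.set) :
    ∃ A1 A2 : Rect, A1.set ⊆ R.set ∧ A2.set ⊆ R.set ∧
      SepSets s A1.set A2.set ∧
      1 ≤ val f1 A1.set ∧ 1 ≤ val f2 A2.set :=
  stmt11_general s f1 f2 hi1 hi2 hn1 hn2 hs1 hs2 R hv1 hv2
end
end
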